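/- arXiv:2507.04897 — 7 statements merged into one kernel-verified Lean document; each statement's English description precedes it below -/
import Mathlib

section
/- Let V be a topological space and V = V^{≤N} ⊇ V^{≤N−1} ⊇ … ⊇ V^{≤0} ⊇ V^{≤−1} = ∅ a descending chain of closed subsets. Then the union over d = 0,…,N of the interiors (in V) of the set differences V^{≤d} \ V^{≤d−1} is dense in V. -/
/-- Let `V` be a topological space and
`V = V^{≤N} ⊇ V^{≤N−1} ⊇ … ⊇ V^{≤0} ⊇ V^{≤−1} = ∅` a descending chain of closed subsets.
Then the union over `d = 0,…,N` of the interiors (in `V`) of the differences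
`V^{≤d} \ V^{≤d−1}` is dense in `V`.

Here `C d` encodes `V^{≤ d-1}`, so that `C 0 = V^{≤ -1} = ∅` and `C (N+1) = V^{≤ N} = V`;
the difference `V^{≤d} \ V^{≤d−1}` is `C (d+1) \ C d`. -/
theorem closed_filtration_interiors_dense
    {V : Type*} [TopologicalSpace V] (N : ℕ) (C : ℕ → Set V)
    (hclosed : ∀ d ≤ N + 1, IsClosed (C d))
    (hmono : ∀ d ≤ N, C d ⊆ C (d + 1))
    (hbot : C 0 = ∅) (htop : C (N + 1) = Set.univ) :
    Dense (⋃ d ∈ Finset.range (N + 1), interior (C (d + 1) \ C d)) := by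
  rw [dense_iff_inter_open]
  intro U hU hUne
  -- property: there is a nonempty open subset of U contained in C (d+1)
  have hex : ∃ d, ∃ W : Set V, IsOpen W ∧ W.Nonempty ∧ W ⊆ U ∧ W ⊆ C (d + 1) :=
    ⟨N, U, hU, hUne, subset_rfl, by rw [htop]; exact Set.subset_univ _⟩
  classical
  set d := Nat.find hex with hd
  obtain ⟨W, hWopen, hWne, hWU, hWC⟩ := Nat.find_spec hex
  have hdN : d ≤ N := Nat.find_le ⟨U, hU, hUne, subset_rfl, by rw [htop]; exact Set.subset_univ _⟩
  -- W \ C d is nonempty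
  have hne : (W \ C d).Nonempty := by
    rw [Set.diff_nonempty]
    intro hsub
    match hd' : d with
    | 0 =>
      rw [hbot] at hsub
      exact hWne.ne_empty (Set.subset_empty_iff.mp hsub)
    | k + 1 =>
      have : k < d := by omega
      exact Nat.find_min hex this ⟨W, hWopen, hWne, hWU, hsub⟩
  have hopen : IsOpen (W \ C d) := hWopen.sdiff (hclosed d (by omega))
  have hsub : W \ C d ⊆ interior (C (d + 1) \ C d) :=
    interior_maximal (Set.diff_subset_diff_left hWC) hopen
  obtain ⟨x, hx⟩ := hne
  refine ⟨x, hWU hx.1, ?_⟩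
  simp only [Set.mem_iUnion, Finset.mem_range]
  exact ⟨d, by omega, hsub hx⟩
end

section
/- Let M₀ and M₁ be normal topological spaces, U_i ⊆ M_i open, Z_i ⊆ M_i closed with Z_i ⊆ U_i, and let G : U₀ → U₁ be a homeomorphism with G(Z₀) = Z₁. Then there exist open neighbourhoods V₀ of Z₀ and V₁ := G(V₀) of Z₁ such that for i = 0,1 one has Z_i ⊆ V_i ⊆ cl_{M_i}(V_i) ⊆ U_i, and moreover cl_{M₁}(V₁) = G(cl_{M₀}(V₀)). -/
/-!
Normality gives an open `A₁ ⊇ Z₁` with `cl A₁ ⊆ U₁`, and then an open `V₀ ⊇ Z₀` with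
`cl V₀ ⊆ G⁻¹(A₁)`. Hence `cl V₁ ⊆ cl A₁ ⊆ U₁`; for sets whose closure stays inside the open
subspace, closure in the ambient space is closure in the subspace, which `G` preserves.
-/

open Set Topology

theorem Topology.IsInducing.closure_image_eq_of_closure_subset_range
    {X Y : Type*} [TopologicalSpace X] [TopologicalSpace Y] {f : X → Y} (hf : IsInducing f)
    {s : Set X} (h : closure (f '' s) ⊆ range f) : closure (f '' s) = f '' closure s := by
  rw [hf.closure_eq_preimage_closure_image, image_preimage_eq_of_subset h]

theorem closure_subtype_preimage_of_subset {X : Type*} [TopologicalSpace X] {U s : Set X}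
    (hs : s ⊆ U) : closure (((↑) : U → X) ⁻¹' s) = (↑) ⁻¹' closure s := by
  rw [IsInducing.subtypeVal.closure_eq_preimage_closure_image,
    image_preimage_eq_of_subset (by rwa [Subtype.range_coe])]

/-- Let `M₀`, `M₁` be normal topological spaces, `Uᵢ ⊆ Mᵢ` open,
`Zᵢ ⊆ Mᵢ` closed with `Zᵢ ⊆ Uᵢ`, and `G : U₀ → U₁` a homeomorphism (of the subspaces)
with `G(Z₀) = Z₁`.  Then there exist open neighbourhoods `V₀` of `Z₀` and
`V₁ := G(V₀)` of `Z₁` such that `Zᵢ ⊆ Vᵢ ⊆ cl_{Mᵢ}(Vᵢ) ⊆ Uᵢ` for `i = 0,1`, and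
moreover `cl_{M₁}(V₁) = G(cl_{M₀}(V₀))`. -/
theorem closed_in_open_with_homeo_nbhd
    {M₀ M₁ : Type*} [TopologicalSpace M₀] [TopologicalSpace M₁]
    [NormalSpace M₀] [NormalSpace M₁]
    (U₀ : Set M₀) (U₁ : Set M₁) (hU₀ : IsOpen U₀) (hU₁ : IsOpen U₁)
    (Z₀ : Set M₀) (Z₁ : Set M₁) (hZ₀ : IsClosed Z₀) (hZ₁ : IsClosed Z₁)
    (hZU₀ : Z₀ ⊆ U₀) (hZU₁ : Z₁ ⊆ U₁)
    (G : U₀ ≃ₜ U₁)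
    (hGZ : (fun x : U₀ => (G x : M₁)) '' {x : U₀ | (x : M₀) ∈ Z₀} = Z₁) :
    ∃ V₀ : Set M₀, IsOpen V₀ ∧ Z₀ ⊆ V₀ ∧ V₀ ⊆ U₀ ∧ closure V₀ ⊆ U₀ ∧
      ∀ V₁ : Set M₁,
        V₁ = (fun x : U₀ => (G x : M₁)) '' {x : U₀ | (x : M₀) ∈ V₀} →
        IsOpen V₁ ∧ Z₁ ⊆ V₁ ∧ V₁ ⊆ U₁ ∧ closure V₁ ⊆ U₁ ∧
          closure V₁ =
            (fun x : U₀ => (G x : M₁)) '' {x : U₀ | (x : M₀) ∈ closure V₀} := by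
  set g : U₀ → M₁ := fun x => (G x : M₁)
  have hg : IsOpenEmbedding g := hU₁.isOpenEmbedding_subtypeVal.comp G.isOpenEmbedding
  have hg_range : range g = U₁ := by
    rw [show g = (↑) ∘ G from rfl, range_comp, G.range_coe, image_univ, Subtype.range_coe]
  obtain ⟨A₁, hA₁, hZA₁, hclA₁⟩ := normal_exists_closure_subset hZ₁ hU₁ hZU₁
  have hW : IsOpen ((↑) '' (g ⁻¹' A₁) : Set M₀) :=
    hU₀.isOpenMap_subtype_val _ (hA₁.preimage hg.continuous)
  have hZW : Z₀ ⊆ (↑) '' (g ⁻¹' A₁) := fun z hz =>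
    ⟨⟨z, hZU₀ hz⟩, hZA₁ (hGZ ▸ mem_image_of_mem g hz), rfl⟩
  obtain ⟨V₀, hV₀, hZV₀, hclV₀W⟩ := normal_exists_closure_subset hZ₀ hW hZW
  have hclV₀ : closure V₀ ⊆ U₀ := hclV₀W.trans (Subtype.coe_image_subset _ _)
  have hV₀U₀ : V₀ ⊆ U₀ := subset_closure.trans hclV₀
  refine ⟨V₀, hV₀, hZV₀, hV₀U₀, hclV₀, ?_⟩
  rintro _ rfl
  have hV₁A₁ : g '' ((↑) ⁻¹' V₀) ⊆ A₁ := image_subset_iff.2 fun x hx =>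
    Subtype.val_injective.mem_set_image.1 (hclV₀W (subset_closure hx))
  have hclV₁ : closure (g '' ((↑) ⁻¹' V₀)) ⊆ U₁ := (closure_mono hV₁A₁).trans hclA₁
  refine ⟨hg.isOpenMap _ (hV₀.preimage continuous_subtype_val),
    hGZ ▸ image_mono fun x hx => hZV₀ hx, subset_closure.trans hclV₁, hclV₁, ?_⟩
  rw [hg.isInducing.closure_image_eq_of_closure_subset_range (hg_range ▸ hclV₁)]
  exact congrArg (g '' ·) (closure_subtype_preimage_of_subset hV₀U₀)
end

section
/- Let V be a symplectic manifold with symplectic form ω, and suppose (A, S) is a Whitney (B) regular stratified subspace of V all of whose strata are isotropic submanifolds. Let R : [0,1] × V → V be a smooth weak deformation retraction of V to A. Then ω is exact on V, with primitive (π_V)_* R^* ω = ∫₀¹ i_t^* ι_{∂/∂t} R^* ω dt. -/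
open scoped BigOperators

noncomputable section

variable {E : Type*} [NormedAddCommGroup E] [NormedSpace ℝ E]

/-- Pointwise multilinearity and alternation for a `k`-form value. -/
def IsAltForm {F : Type*} [NormedAddCommGroup F] [NormedSpace ℝ F]
    (k : ℕ) (T : (Fin k → F) → ℝ) : Prop :=
  (∀ (v : Fin k → F) (i : Fin k) (a b : F),
      T (Function.update v i (a + b)) = T (Function.update v i a) + T (Function.update v i b)) ∧
  (∀ (v : Fin k → F) (i : Fin k) (c : ℝ) (a : F),
      T (Function.update v i (c • a)) = c * T (Function.update v i a)) ∧
  (∀ (v : Fin k → F) (i j : Fin k), i ≠ j → v i = v j → T v = 0)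

/-- Exterior derivative of a `k`-form. -/
def extD {F : Type*} [NormedAddCommGroup F] [NormedSpace ℝ F]
    (k : ℕ) (ω : F → (Fin k → F) → ℝ) : F → (Fin (k + 1) → F) → ℝ :=
  fun x v => ∑ i : Fin (k + 1),
    (-1 : ℝ) ^ (i : ℕ) * fderiv ℝ (fun y => ω y (i.removeNth v)) x (v i)

/-- Pullback of a `k`-form along a smooth map. -/
def pullb {E' F : Type*} [NormedAddCommGroup E'] [NormedSpace ℝ E']
    [NormedAddCommGroup F] [NormedSpace ℝ F]
    (k : ℕ) (f : E' → F) (ω : F → (Fin k → F) → ℝ) : E' → (Fin k → E') → ℝ :=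
  fun x v => ω (f x) (fun i => fderiv ℝ f x (v i))

/-- The fiber integration operator `(π_V)_* γ = ∫₀¹ i_t^* (ι_{∂/∂t} γ) dt`. -/
def fiberInt (k : ℕ) (γ : ℝ × E → (Fin (k + 1) → ℝ × E) → ℝ) :
    E → (Fin k → E) → ℝ :=
  fun x v => ∫ t in (0 : ℝ)..1,
    γ (t, x) (Fin.cons ((1 : ℝ), (0 : E)) (fun i => ((0 : ℝ), v i)))

/-- A tangent vector at `p` to the subset `X`: the velocity of a smooth curve in `X`. -/
def TangentVecS (X : Set E) (p v : E) : Prop :=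
  ∃ γ : ℝ → E, (∀ t, γ t ∈ X) ∧ γ 0 = p ∧ HasDerivAt γ v 0

/-- A symplectic form on the model space: smooth, pointwise alternating,
closed, nondegenerate. -/
def IsSymplecticForm (ω : E → (Fin 2 → E) → ℝ) : Prop :=
  (∀ x, IsAltForm 2 (ω x)) ∧
  ContDiff ℝ (⊤ : ℕ∞) (fun q : E × (Fin 2 → E) => ω q.1 q.2) ∧
  (∀ x, ∀ v : Fin 3 → E, extD 2 ω x v = 0) ∧
  (∀ x, ∀ v : E, v ≠ 0 → ∃ w : E, ω x ![v, w] ≠ 0)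

set_option linter.unusedSectionVars false

section Helpers



variable {E : Type*} [NormedAddCommGroup E] [NormedSpace ℝ E]

lemma fin2_eta (w : Fin 2 → E) : w = ![w 0, w 1] := by
  funext i; fin_cases i <;> rfl

lemma upd2_0 (a b c : E) : Function.update ![a, b] 0 c = ![c, b] := by
  funext i; fin_cases i <;> simp [Function.update]

lemma upd2_1 (a b c : E) : Function.update ![a, b] 1 c = ![a, c] := by
  funext i; fin_cases i <;> simp [Function.update]

namespace IsAltForm

variable {T : (Fin 2 → E) → ℝ}

lemma add0 (h : IsAltForm 2 T) (a b c : E) : T ![a + b, c] = T ![a, c] + T ![b, c] := by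
  have := h.1 ![0, c] 0 a b
  simpa [upd2_0] using this

lemma add1 (h : IsAltForm 2 T) (a b c : E) : T ![a, b + c] = T ![a, b] + T ![a, c] := by
  have := h.1 ![a, 0] 1 b c
  simpa [upd2_1] using this

lemma smul0 (h : IsAltForm 2 T) (s : ℝ) (a b : E) : T ![s • a, b] = s * T ![a, b] := by
  have := h.2.1 ![0, b] 0 s a
  simpa [upd2_0] using this

lemma smul1 (h : IsAltForm 2 T) (s : ℝ) (a b : E) : T ![a, s • b] = s * T ![a, b] := by
  have := h.2.1 ![a, 0] 1 s b
  simpa [upd2_1] using this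

lemma diag (h : IsAltForm 2 T) (a : E) : T ![a, a] = 0 :=
  h.2.2 ![a, a] 0 1 (by decide) rfl

lemma swap (h : IsAltForm 2 T) (a b : E) : T ![a, b] = - T ![b, a] := by
  have h0 : T ![a + b, a + b] = 0 := h.diag _
  rw [h.add0, h.add1, h.add1, h.diag, h.diag] at h0
  linarith

end IsAltForm

end Helpers

section DerivHelpers



variable {E : Type*} [NormedAddCommGroup E] [NormedSpace ℝ E]
variable {P : Type*} [NormedAddCommGroup P] [NormedSpace ℝ P]

lemma fderiv_W_snd (ω : E → (Fin 2 → E) → ℝ) (halt : ∀ x, IsAltForm 2 (ω x))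
    (hsm : ContDiff ℝ ((⊤ : ℕ∞) : WithTop ℕ∞) (fun q : E × (Fin 2 → E) => ω q.1 q.2))
    (x a b a' b' : E) :
    fderiv ℝ (fun q : E × (Fin 2 → E) => ω q.1 q.2) (x, ![a, b]) ((0 : E), ![a', b'])
      = ω x ![a', b] + ω x ![a, b'] := by
  set W : E × (Fin 2 → E) → ℝ := fun q => ω q.1 q.2 with hWdef
  have hline : HasDerivAt (fun s : ℝ =>
      ((x, ![a, b]) : E × (Fin 2 → E)) + s • (((0 : E), ![a', b']) : E × (Fin 2 → E)))
      (((0 : E), ![a', b']) : E × (Fin 2 → E)) 0 := by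
    simpa using ((hasDerivAt_id (0:ℝ)).smul_const
      ((((0 : E), ![a', b'])) : E × (Fin 2 → E))).const_add ((x, ![a, b]) : E × (Fin 2 → E))
  have hWd : HasFDerivAt W (fderiv ℝ W (x, ![a, b])) (x, ![a, b]) :=
    ((hsm.differentiable (by decide)) _).hasFDerivAt
  have e0 : ((x, ![a, b]) : E × (Fin 2 → E)) + (0:ℝ) • (((0 : E), ![a', b']) : E × (Fin 2 → E))
      = (x, ![a, b]) := by simp
  rw [← e0] at hWd
  have h1 : HasDerivAt (fun s : ℝ =>
      W (((x, ![a, b]) : E × (Fin 2 → E)) + s • (((0 : E), ![a', b']) : E × (Fin 2 → E))))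
      (fderiv ℝ W (x, ![a, b]) (((0 : E), ![a', b']) : E × (Fin 2 → E))) 0 := by
    have h1' := hWd.comp_hasDerivAt 0 hline
    rw [e0] at h1'
    exact h1'
  have heq : (fun s : ℝ =>
      W (((x, ![a, b]) : E × (Fin 2 → E)) + s • (((0 : E), ![a', b']) : E × (Fin 2 → E))))
      = fun s : ℝ => ω x ![a, b] + s * (ω x ![a', b] + ω x ![a, b'])
          + s ^ 2 * ω x ![a', b'] := by
    funext s
    have hv : ((x, ![a, b]) : E × (Fin 2 → E)) + s • (((0 : E), ![a', b']) : E × (Fin 2 → E))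
        = (x, ![a + s • a', b + s • b']) := by
      refine Prod.ext (by simp) ?_
      funext i; fin_cases i <;> simp
    rw [hv]
    show ω x ![a + s • a', b + s • b'] = _
    rw [(halt x).add0, (halt x).add1, (halt x).add1, (halt x).smul0,
      (halt x).smul1, (halt x).smul1, (halt x).smul0]
    ring
  rw [heq] at h1
  have h2 : HasDerivAt (fun s : ℝ => ω x ![a, b] + s * (ω x ![a', b] + ω x ![a, b'])
      + s ^ 2 * ω x ![a', b']) (ω x ![a', b] + ω x ![a, b']) 0 := by
    have ha : HasDerivAt (fun s : ℝ => s * (ω x ![a', b] + ω x ![a, b']))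
        (ω x ![a', b] + ω x ![a, b']) 0 := by
      simpa using (hasDerivAt_id (0:ℝ)).mul_const (ω x ![a', b] + ω x ![a, b'])
    have hb : HasDerivAt (fun s : ℝ => s ^ 2 * ω x ![a', b']) 0 0 := by
      simpa using (hasDerivAt_pow 2 (0:ℝ)).mul_const (ω x ![a', b'])
    have h3 := (ha.const_add (ω x ![a, b])).add hb
    rw [add_zero] at h3
    exact h3
  exact h1.unique h2

lemma fderiv_W_fst (ω : E → (Fin 2 → E) → ℝ)
    (hsm : ContDiff ℝ ((⊤ : ℕ∞) : WithTop ℕ∞) (fun q : E × (Fin 2 → E) => ω q.1 q.2))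
    (x : E) (w : Fin 2 → E) (c : E) :
    fderiv ℝ (fun y => ω y w) x c
      = fderiv ℝ (fun q : E × (Fin 2 → E) => ω q.1 q.2) (x, w) ((c, 0) : E × (Fin 2 → E)) := by
  set W : E × (Fin 2 → E) → ℝ := fun q => ω q.1 q.2 with hWdef
  have h := (((hsm.differentiable (by decide)) ((x, w) : E × (Fin 2 → E))).hasFDerivAt).comp (f := fun e : E => ((e, w) : E × (Fin 2 → E))) x
    (hasFDerivAt_prodMk_left x w)
  have h2 : fderiv ℝ (fun y => ω y w) x
      = (fderiv ℝ W (x, w)).comp (ContinuousLinearMap.inl ℝ E (Fin 2 → E)) := h.fderiv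
  rw [h2]
  rfl

lemma fderiv_form_comp (ω : E → (Fin 2 → E) → ℝ) (halt : ∀ x, IsAltForm 2 (ω x))
    (hsm : ContDiff ℝ ((⊤ : ℕ∞) : WithTop ℕ∞) (fun q : E × (Fin 2 → E) => ω q.1 q.2))
    (F a b : P → E) (p : P)
    (hF : DifferentiableAt ℝ F p) (ha : DifferentiableAt ℝ a p)
    (hb : DifferentiableAt ℝ b p) (c : P) :
    fderiv ℝ (fun q => ω (F q) ![a q, b q]) p c
      = fderiv ℝ (fun y => ω y ![a p, b p]) (F p) (fderiv ℝ F p c)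
        + ω (F p) ![fderiv ℝ a p c, b p] + ω (F p) ![a p, fderiv ℝ b p c] := by
  set W : E × (Fin 2 → E) → ℝ := fun q => ω q.1 q.2 with hWdef
  have hvec : HasFDerivAt (fun q => (![a q, b q] : Fin 2 → E))
      (ContinuousLinearMap.pi ![fderiv ℝ a p, fderiv ℝ b p]) p := by
    have hfe : (fun q => (![a q, b q] : Fin 2 → E))
        = fun q i => (![a, b] : Fin 2 → P → E) i q := by
      funext q i; fin_cases i <;> rfl
    rw [hfe]
    refine hasFDerivAt_pi.2 ?_
    intro i; fin_cases i
    · simpa using ha.hasFDerivAt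
    · simpa using hb.hasFDerivAt
  have hg : HasFDerivAt (fun q => ((F q, ![a q, b q]) : E × (Fin 2 → E)))
      ((fderiv ℝ F p).prod (ContinuousLinearMap.pi ![fderiv ℝ a p, fderiv ℝ b p])) p :=
    HasFDerivAt.prodMk hF.hasFDerivAt hvec
  have hWd : HasFDerivAt W (fderiv ℝ W ((F p, ![a p, b p]) : E × (Fin 2 → E)))
      ((F p, ![a p, b p]) : E × (Fin 2 → E)) :=
    ((hsm.differentiable (by decide)) _).hasFDerivAt
  have hfd : fderiv ℝ (fun q => ω (F q) ![a q, b q]) p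
      = (fderiv ℝ W ((F p, ![a p, b p]) : E × (Fin 2 → E))).comp
          ((fderiv ℝ F p).prod (ContinuousLinearMap.pi ![fderiv ℝ a p, fderiv ℝ b p])) :=
    (hWd.comp (f := fun q => ((F q, ![a q, b q]) : E × (Fin 2 → E))) p hg).fderiv
  rw [hfd, ContinuousLinearMap.comp_apply]
  have happ : ((fderiv ℝ F p).prod (ContinuousLinearMap.pi ![fderiv ℝ a p, fderiv ℝ b p])) c
      = ((fderiv ℝ F p c, ![fderiv ℝ a p c, fderiv ℝ b p c]) : E × (Fin 2 → E)) := by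
    refine Prod.ext rfl ?_
    funext i; fin_cases i <;> simp
  rw [happ]
  have hsplit : ((fderiv ℝ F p c, ![fderiv ℝ a p c, fderiv ℝ b p c]) : E × (Fin 2 → E))
      = ((fderiv ℝ F p c, 0) : E × (Fin 2 → E))
        + (((0 : E), ![fderiv ℝ a p c, fderiv ℝ b p c]) : E × (Fin 2 → E)) := by
    refine Prod.ext (by simp) ?_
    funext i; fin_cases i <;> simp
  rw [hsplit, map_add]
  rw [fderiv_W_snd ω halt hsm (F p) (a p) (b p) (fderiv ℝ a p c) (fderiv ℝ b p c),
    ← fderiv_W_fst ω hsm (F p) ![a p, b p] (fderiv ℝ F p c)]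
  ring

lemma schwarz_apply (F : P → E) (hF : ContDiff ℝ ((⊤ : ℕ∞) : WithTop ℕ∞) F) (p c d : P) :
    fderiv ℝ (fun q => fderiv ℝ F q c) p d = fderiv ℝ (fun q => fderiv ℝ F q d) p c := by
  have hD : DifferentiableAt ℝ (fderiv ℝ F) p :=
    ((hF.fderiv_right (m := ((⊤ : ℕ∞) : WithTop ℕ∞)) (by simp)).differentiable (by decide)) p
  rw [fderiv_clm_apply hD (differentiableAt_const c),
    fderiv_clm_apply hD (differentiableAt_const d)]
  have hsymm := (hF.contDiffAt (x := p)).isSymmSndFDerivAt (by simp [minSmoothness_of_isRCLikeNormedField]; exact WithTop.coe_le_coe.2 (le_top : (2:ℕ∞) ≤ ⊤))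
  simpa using hsymm d c

lemma contDiff_form_comp (ω : E → (Fin 2 → E) → ℝ)
    (hsm : ContDiff ℝ ((⊤ : ℕ∞) : WithTop ℕ∞) (fun q : E × (Fin 2 → E) => ω q.1 q.2))
    (F : P → E) (hF : ContDiff ℝ ((⊤ : ℕ∞) : WithTop ℕ∞) F) (c1 c2 : P) :
    ContDiff ℝ ((⊤ : ℕ∞) : WithTop ℕ∞) (fun q => ω (F q) ![fderiv ℝ F q c1, fderiv ℝ F q c2]) := by
  have hD : ContDiff ℝ ((⊤ : ℕ∞) : WithTop ℕ∞) (fderiv ℝ F) := hF.fderiv_right (m := ((⊤ : ℕ∞) : WithTop ℕ∞)) (by simp)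
  have hc : ∀ c : P, ContDiff ℝ ((⊤ : ℕ∞) : WithTop ℕ∞) (fun q => fderiv ℝ F q c) := fun c =>
    hD.clm_apply contDiff_const
  have hg : ContDiff ℝ ((⊤ : ℕ∞) : WithTop ℕ∞)
      (fun q => ((F q, ![fderiv ℝ F q c1, fderiv ℝ F q c2]) : E × (Fin 2 → E))) := by
    refine hF.prodMk (contDiff_pi.2 ?_)
    intro i; fin_cases i
    · simpa using hc c1
    · simpa using hc c2
  exact hsm.comp hg

end DerivHelpers

section StarIdentity

variable {E : Type*} [NormedAddCommGroup E] [NormedSpace ℝ E]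
variable {P : Type*} [NormedAddCommGroup P] [NormedSpace ℝ P]

lemma closed3 (ω : E → (Fin 2 → E) → ℝ) (hcl : ∀ x, ∀ v : Fin 3 → E, extD 2 ω x v = 0)
    (x a b c : E) :
    fderiv ℝ (fun y => ω y ![b, c]) x a - fderiv ℝ (fun y => ω y ![a, c]) x b
      + fderiv ℝ (fun y => ω y ![a, b]) x c = 0 := by
  have h := hcl x ![a, b, c]
  have r0 : Fin.removeNth (0 : Fin 3) ![a, b, c] = ![b, c] := by
    funext j; fin_cases j <;> rfl
  have r1 : Fin.removeNth (1 : Fin 3) ![a, b, c] = ![a, c] := by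
    funext j; fin_cases j <;> rfl
  have r2 : Fin.removeNth (2 : Fin 3) ![a, b, c] = ![a, b] := by
    funext j; fin_cases j <;> rfl
  simp only [extD, Nat.reduceAdd, Fin.sum_univ_three, r0, r1, r2] at h
  norm_num at h
  have e2 : (![a, b, c] : Fin 3 → E) 2 = c := rfl
  rw [e2] at h
  linarith [h]

lemma star_identity (ω : E → (Fin 2 → E) → ℝ) (halt : ∀ x, IsAltForm 2 (ω x))
    (hsm : ContDiff ℝ ((⊤ : ℕ∞) : WithTop ℕ∞) (fun q : E × (Fin 2 → E) => ω q.1 q.2))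
    (hcl : ∀ x, ∀ v : Fin 3 → E, extD 2 ω x v = 0)
    (F : P → E) (hF : ContDiff ℝ ((⊤ : ℕ∞) : WithTop ℕ∞) F) (p c0 c1 c2 : P) :
    fderiv ℝ (fun q => ω (F q) ![fderiv ℝ F q c1, fderiv ℝ F q c2]) p c0
      = fderiv ℝ (fun q => ω (F q) ![fderiv ℝ F q c0, fderiv ℝ F q c2]) p c1
        - fderiv ℝ (fun q => ω (F q) ![fderiv ℝ F q c0, fderiv ℝ F q c1]) p c2 := by
  have hDF : ContDiff ℝ ((⊤ : ℕ∞) : WithTop ℕ∞) (fderiv ℝ F) :=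
    hF.fderiv_right (m := ((⊤ : ℕ∞) : WithTop ℕ∞)) (by simp)
  have hdF : ∀ c : P, DifferentiableAt ℝ (fun q => fderiv ℝ F q c) p := fun c =>
    ((hDF.clm_apply contDiff_const).differentiable (by decide)) p
  have hFd : DifferentiableAt ℝ F p := (hF.differentiable (by decide)) p
  have E1 := fderiv_form_comp ω halt hsm F _ _ p hFd (hdF c1) (hdF c2) c0
  have E2 := fderiv_form_comp ω halt hsm F _ _ p hFd (hdF c0) (hdF c2) c1
  have E3 := fderiv_form_comp ω halt hsm F _ _ p hFd (hdF c0) (hdF c1) c2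
  have hs1 : fderiv ℝ (fun q => fderiv ℝ F q c0) p c1
      = fderiv ℝ (fun q => fderiv ℝ F q c1) p c0 := schwarz_apply F hF p c0 c1
  have hs2 : fderiv ℝ (fun q => fderiv ℝ F q c0) p c2
      = fderiv ℝ (fun q => fderiv ℝ F q c2) p c0 := schwarz_apply F hF p c0 c2
  have hs3 : fderiv ℝ (fun q => fderiv ℝ F q c1) p c2
      = fderiv ℝ (fun q => fderiv ℝ F q c2) p c1 := schwarz_apply F hF p c1 c2
  have hcl3 := closed3 ω hcl (F p) (fderiv ℝ F p c0) (fderiv ℝ F p c1) (fderiv ℝ F p c2)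
  have hswap : ω (F p) ![fderiv ℝ F p c1, fderiv ℝ (fun q => fderiv ℝ F q c2) p c0]
      = - ω (F p) ![fderiv ℝ (fun q => fderiv ℝ F q c2) p c0, fderiv ℝ F p c1] :=
    (halt (F p)).swap _ _
  rw [E1, E2, E3, hs1, hs2, hs3] at *
  linarith [hcl3, hswap]

end StarIdentity

section ParamInt

open MeasureTheory

variable {E : Type*} [NormedAddCommGroup E] [NormedSpace ℝ E]

set_option synthInstance.maxHeartbeats 1000000 in
lemma param_hasFDerivAt (G : ℝ × E → ℝ)
    (hG : ContDiff ℝ ((⊤ : ℕ∞) : WithTop ℕ∞) G) (x : E) :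
    HasFDerivAt (fun y => ∫ t in (0:ℝ)..1, G (t, y))
      (∫ t in (0:ℝ)..1, (fderiv ℝ G (t, x)).comp (ContinuousLinearMap.inr ℝ ℝ E)) x := by
  have hGd : ContDiff ℝ ((⊤ : ℕ∞) : WithTop ℕ∞) (fderiv ℝ G) :=
    hG.fderiv_right (m := ((⊤ : ℕ∞) : WithTop ℕ∞)) (by simp)
  have hGc : Continuous G := hG.continuous
  have hcont : Continuous (fun p : ℝ × E => ‖fderiv ℝ G p‖) := hGd.continuous.norm
  have hK : IsCompact ((Set.Icc (0:ℝ) 1) ×ˢ ({x} : Set E)) :=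
    isCompact_Icc.prod isCompact_singleton
  obtain ⟨M, hM⟩ : ∃ M, ∀ p ∈ (Set.Icc (0:ℝ) 1) ×ˢ ({x} : Set E), ‖fderiv ℝ G p‖ ≤ M :=
    hK.exists_bound_of_continuousOn hGd.continuous.continuousOn
  have hM0 : (0:ℝ) ≤ M := le_trans (norm_nonneg (fderiv ℝ G (0, x)))
    (by simpa using hM (0, x) (by simp))
  have hNopen : IsOpen {p : ℝ × E | ‖fderiv ℝ G p‖ < M + 1} :=
    isOpen_lt hcont continuous_const
  have hKN : (Set.Icc (0:ℝ) 1) ×ˢ ({x} : Set E) ⊆ {p : ℝ × E | ‖fderiv ℝ G p‖ < M + 1} :=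
    fun p hp => lt_of_le_of_lt (hM p hp) (by linarith)
  obtain ⟨u, v, hu, hv, hsu, htv, huv⟩ :=
    generalized_tube_lemma isCompact_Icc isCompact_singleton hNopen hKN
  obtain ⟨ε, hε, hball⟩ := Metric.isOpen_iff.1 hv x (htv rfl)
  have hbound : ∀ t ∈ Set.Icc (0:ℝ) 1, ∀ y ∈ Metric.ball x ε,
      ‖(fderiv ℝ G (t, y)).comp (ContinuousLinearMap.inr ℝ ℝ E)‖ ≤ M + 1 := by
    intro t ht y hy
    have hmem : ((t, y) : ℝ × E) ∈ {p : ℝ × E | ‖fderiv ℝ G p‖ < M + 1} :=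
      huv ⟨hsu ht, hball hy⟩
    have hA : ‖fderiv ℝ G (t, y)‖ ≤ M + 1 := le_of_lt hmem
    refine ContinuousLinearMap.opNorm_le_bound _ (by linarith) (fun w => ?_)
    have h1 : ‖fderiv ℝ G (t, y) ((0 : ℝ), w)‖ ≤ ‖fderiv ℝ G (t, y)‖ * ‖((0:ℝ), w)‖ :=
      (fderiv ℝ G (t, y)).le_opNorm _
    have h2 : ‖(((0:ℝ), w) : ℝ × E)‖ = ‖w‖ := by
      simp [Prod.norm_def]
    calc ‖((fderiv ℝ G (t, y)).comp (ContinuousLinearMap.inr ℝ ℝ E)) w‖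
        = ‖fderiv ℝ G (t, y) ((0 : ℝ), w)‖ := rfl
      _ ≤ ‖fderiv ℝ G (t, y)‖ * ‖w‖ := by rw [← h2]; exact h1
      _ ≤ (M + 1) * ‖w‖ := mul_le_mul_of_nonneg_right hA (norm_nonneg w)
  refine intervalIntegral.hasFDerivAt_integral_of_dominated_of_fderiv_le
    (F := fun y t => G (t, y))
    (F' := fun y t => (fderiv ℝ G (t, y)).comp (ContinuousLinearMap.inr ℝ ℝ E))
    (bound := fun _ => M + 1) (Metric.ball_mem_nhds x hε) ?_ ?_ ?_ ?_ ?_ ?_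
  · exact Filter.Eventually.of_forall fun y =>
      ((hGc.comp (continuous_id.prodMk continuous_const)).aestronglyMeasurable)
  · exact (hGc.comp (continuous_id.prodMk continuous_const)).intervalIntegrable 0 1
  · exact (((hGd.continuous.comp (continuous_id.prodMk continuous_const)).clm_comp
      continuous_const)).aestronglyMeasurable
  · refine MeasureTheory.ae_of_all _ fun t ht y hy => ?_
    have ht' : t ∈ Set.Icc (0:ℝ) 1 :=
      Set.Ioc_subset_Icc_self (by rwa [Set.uIoc_of_le zero_le_one] at ht)
    exact hbound t ht' y hy
  · exact intervalIntegrable_const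
  · refine MeasureTheory.ae_of_all _ fun t ht y hy => ?_
    exact (((hG.differentiable (by decide)) (t, y)).hasFDerivAt).comp y
      (hasFDerivAt_prodMk_right t y)

lemma param_fderiv_apply (G : ℝ × E → ℝ)
    (hG : ContDiff ℝ ((⊤ : ℕ∞) : WithTop ℕ∞) G) (x : E) (w : E) :
    fderiv ℝ (fun y => ∫ t in (0:ℝ)..1, G (t, y)) x w
      = ∫ t in (0:ℝ)..1, fderiv ℝ G (t, x) ((0 : ℝ), w) := by
  have h := (param_hasFDerivAt G hG x).fderiv
  rw [h]
  have hGd : ContDiff ℝ ((⊤ : ℕ∞) : WithTop ℕ∞) (fderiv ℝ G) :=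
    hG.fderiv_right (m := ((⊤ : ℕ∞) : WithTop ℕ∞)) (by simp)
  have hφc : Continuous (fun t : ℝ =>
      (fderiv ℝ G (t, x)).comp (ContinuousLinearMap.inr ℝ ℝ E)) :=
    (hGd.continuous.comp (continuous_id.prodMk continuous_const)).clm_comp continuous_const
  have hφint : MeasureTheory.IntegrableOn (fun t : ℝ =>
      (fderiv ℝ G (t, x)).comp (ContinuousLinearMap.inr ℝ ℝ E)) (Set.Ioc (0:ℝ) 1) :=
    hφc.integrableOn_Ioc
  rw [intervalIntegral.integral_of_le zero_le_one, intervalIntegral.integral_of_le zero_le_one]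
  rw [ContinuousLinearMap.integral_apply hφint w]
  rfl

lemma param_ftc (Φ : ℝ × E → ℝ)
    (hΦ : ContDiff ℝ ((⊤ : ℕ∞) : WithTop ℕ∞) Φ) (x : E) :
    ∫ t in (0:ℝ)..1, fderiv ℝ Φ (t, x) ((1 : ℝ), (0 : E)) = Φ (1, x) - Φ (0, x) := by
  have hd : ∀ t : ℝ, HasDerivAt (fun s => Φ (s, x)) (fderiv ℝ Φ (t, x) ((1:ℝ), (0:E))) t := by
    intro t
    have hc : HasDerivAt (fun s : ℝ => ((s, x) : ℝ × E)) (((1:ℝ), (0:E)) : ℝ × E) t :=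
      HasDerivAt.prodMk (hasDerivAt_id t) (hasDerivAt_const t x)
    exact (((hΦ.differentiable (by decide)) ((t, x) : ℝ × E)).hasFDerivAt).comp_hasDerivAt t hc
  have hΦd : ContDiff ℝ ((⊤ : ℕ∞) : WithTop ℕ∞) (fderiv ℝ Φ) :=
    hΦ.fderiv_right (m := ((⊤ : ℕ∞) : WithTop ℕ∞)) (by simp)
  have hint : IntervalIntegrable (fun t => fderiv ℝ Φ (t, x) ((1:ℝ), (0:E)))
      MeasureTheory.volume 0 1 := by
    apply Continuous.intervalIntegrable
    exact (hΦd.continuous.comp (continuous_id.prodMk continuous_const)).clm_apply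
      continuous_const
  exact intervalIntegral.integral_eq_sub_of_hasDerivAt (fun t _ => hd t) hint

end ParamInt

section Stratified

variable {E : Type*} [NormedAddCommGroup E] [NormedSpace ℝ E]

lemma isotropic_vanishing (ω : E → (Fin 2 → E) → ℝ)
    (hsm : ContDiff ℝ ((⊤ : ℕ∞) : WithTop ℕ∞) (fun q : E × (Fin 2 → E) => ω q.1 q.2))
    (S : Set (Set E)) (A : Set E) (hA : A = ⋃₀ S)
    (hlocclosed : ∀ X ∈ S, IsLocallyClosed X)
    (hlf : ∀ p : E, ∃ U ∈ nhds p, {X ∈ S | (X ∩ U).Nonempty}.Finite)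
    (hiso : ∀ X ∈ S, ∀ p ∈ X, ∀ v w : E,
        TangentVecS X p v → TangentVecS X p w → ω p ![v, w] = 0)
    (f : ℝ × ℝ → E) (hf : ContDiff ℝ ((⊤ : ℕ∞) : WithTop ℕ∞) f) (hfA : ∀ z, f z ∈ A) :
    ∀ z, ω (f z) ![fderiv ℝ f z ((1:ℝ), (0:ℝ)), fderiv ℝ f z ((0:ℝ), (1:ℝ))] = 0 := by
  have hfc : Continuous f := hf.continuous
  have hΘ : Continuous (fun z : ℝ × ℝ =>
      ω (f z) ![fderiv ℝ f z ((1:ℝ), (0:ℝ)), fderiv ℝ f z ((0:ℝ), (1:ℝ))]) :=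
    (contDiff_form_comp ω hsm f hf ((1:ℝ), (0:ℝ)) ((0:ℝ), (1:ℝ))).continuous
  set Z : Set (ℝ × ℝ) := (fun z : ℝ × ℝ =>
      ω (f z) ![fderiv ℝ f z ((1:ℝ), (0:ℝ)), fderiv ℝ f z ((0:ℝ), (1:ℝ))]) ⁻¹' {0} with hZdef
  have hZclosed : IsClosed Z := isClosed_singleton.preimage hΘ
  have hZdense : Dense Z := by
    rw [Metric.dense_iff]
    intro z₀ ε hε
    obtain ⟨U, hU, hfin⟩ := hlf (f z₀)
    have hUi : f z₀ ∈ interior U := mem_interior_iff_mem_nhds.2 hU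
    have hpre : IsOpen (f ⁻¹' interior U) := isOpen_interior.preimage hfc
    obtain ⟨δ₁, hδ₁, hb₁⟩ := Metric.isOpen_iff.1 hpre z₀ hUi
    set δ : ℝ := min δ₁ ε with hδdef
    have hδpos : 0 < δ := lt_min hδ₁ hε
    set B : Set (ℝ × ℝ) := Metric.ball z₀ δ with hBdef
    have hBU : ∀ z ∈ B, f z ∈ interior U := fun z hz =>
      hb₁ (Metric.ball_subset_ball (min_le_left _ _) hz)
    have hcover : ∀ z ∈ B, ∃ X, (X ∈ S ∧ (X ∩ U).Nonempty) ∧ f z ∈ X := by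
      intro z hz
      have hzA : f z ∈ ⋃₀ S := by rw [← hA]; exact hfA z
      obtain ⟨X, hXS, hfz⟩ := hzA
      exact ⟨X, ⟨hXS, ⟨f z, hfz, interior_subset (hBU z hz)⟩⟩, hfz⟩
    -- Baire category argument
    classical
    have hfirst : ∃ X ∈ hfin.toFinset,
        (B ∩ interior (closure (f ⁻¹' X ∩ B))).Nonempty := by
      set g : Option ↥hfin.toFinset → Set (ℝ × ℝ) := fun o =>
        o.elim Bᶜ (fun X => closure (f ⁻¹' (X : Set E) ∩ B)) with hgdef
      have hgc : ∀ i, IsClosed (g i) := by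
        rintro (_ | X)
        · exact Metric.isOpen_ball.isClosed_compl
        · exact isClosed_closure
      have hgu : (⋃ i, g i) = Set.univ := by
        apply Set.eq_univ_of_forall
        intro z
        by_cases hz : z ∈ B
        · obtain ⟨X, hX, hfz⟩ := hcover z hz
          refine Set.mem_iUnion.2 ⟨some ⟨X, hfin.mem_toFinset.2 hX⟩, ?_⟩
          exact subset_closure ⟨hfz, hz⟩
        · exact Set.mem_iUnion.2 ⟨none, hz⟩
      have hd := dense_iUnion_interior_of_closed hgc hgu
      obtain ⟨z₁, hz₁i, hz₁B⟩ := hd.exists_mem_open Metric.isOpen_ball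
        ⟨z₀, Metric.mem_ball_self hδpos⟩
      obtain ⟨i, hi⟩ := Set.mem_iUnion.1 hz₁i
      match i with
      | none => exact absurd hz₁B (interior_subset hi)
      | some X => exact ⟨(X : Set E), X.2, ⟨z₁, hz₁B, hi⟩⟩
    obtain ⟨X, hXmem, ⟨z₁, hz₁B, hz₁V⟩⟩ := hfirst
    have hXS : X ∈ S := (hfin.mem_toFinset.1 hXmem).1
    set V : Set (ℝ × ℝ) := interior (closure (f ⁻¹' X ∩ B)) with hVdef
    have hVsub : V ⊆ f ⁻¹' closure X := by
      intro z hz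
      have hsub : closure (f ⁻¹' X ∩ B) ⊆ f ⁻¹' closure X :=
        closure_minimal (fun w hw => subset_closure hw.1) (isClosed_closure.preimage hfc)
      exact hsub (interior_subset hz)
    obtain ⟨O, C, hO, hC, hXOC⟩ := hlocclosed X hXS
    have hclC : closure X ⊆ C := closure_minimal (by rw [hXOC]; exact Set.inter_subset_right) hC
    have hmemX : ∀ y : E, y ∈ closure X → y ∈ O → y ∈ X := by
      intro y h1 h2; rw [hXOC]; exact ⟨h2, hclC h1⟩
    -- find a point z₂ in V ∩ B whose image is in X
    have hz₁cl : z₁ ∈ closure (f ⁻¹' X ∩ B) := interior_subset hz₁V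
    obtain ⟨z₂, ⟨hz₂V, hz₂B⟩, hz₂X, _⟩ :=
      mem_closure_iff.1 hz₁cl (V ∩ B) (isOpen_interior.inter Metric.isOpen_ball) ⟨hz₁V, hz₁B⟩
    set W : Set (ℝ × ℝ) := (V ∩ B) ∩ f ⁻¹' O with hWdef
    have hWopen : IsOpen W :=
      ((isOpen_interior.inter Metric.isOpen_ball).inter (hO.preimage hfc))
    have hz₂O : f z₂ ∈ O := by rw [hXOC] at hz₂X; exact hz₂X.1
    have hz₂W : z₂ ∈ W := ⟨⟨hz₂V, hz₂B⟩, hz₂O⟩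
    have hWX : ∀ z ∈ W, f z ∈ X := fun z hz =>
      hmemX _ (hVsub hz.1.1) hz.2
    obtain ⟨ρ, hρ, hballW⟩ := Metric.isOpen_iff.1 hWopen z₂ hz₂W
    have htan : ∀ c : ℝ × ℝ, TangentVecS X (f z₂) (fderiv ℝ f z₂ c) := by
      intro c
      set r' : ℝ := ρ / (2 * (‖c‖ + 1)) with hr'def
      have hr'pos : 0 < r' := div_pos hρ (by positivity)
      refine ⟨fun s => f (z₂ + (r' * Real.sin (s / r')) • c), ?_, ?_, ?_⟩
      · intro s
        apply hWX
        apply hballW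
        rw [Metric.mem_ball, dist_eq_norm]
        have h1 : z₂ + (r' * Real.sin (s / r')) • c - z₂ = (r' * Real.sin (s / r')) • c := by
          abel
        rw [h1, norm_smul, Real.norm_eq_abs]
        have h2 : |r' * Real.sin (s / r')| ≤ r' := by
          rw [abs_mul, abs_of_pos hr'pos]
          have hs1 := Real.sin_le_one (s / r')
          have hs2 := Real.neg_one_le_sin (s / r')
          have : |Real.sin (s / r')| ≤ 1 := abs_le.2 ⟨hs2, hs1⟩
          nlinarith
        have h3 : r' * ‖c‖ < ρ := by
          rw [hr'def, div_mul_eq_mul_div, div_lt_iff₀ (by positivity)]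
          nlinarith [norm_nonneg c, hρ]
        calc |r' * Real.sin (s / r')| * ‖c‖
            ≤ r' * ‖c‖ := mul_le_mul_of_nonneg_right h2 (norm_nonneg c)
          _ < ρ := h3
      · simp
      · have h1 : HasDerivAt (fun s : ℝ => s / r') (1 / r') 0 := by
          simpa using (hasDerivAt_id (0:ℝ)).div_const r'
        have h2 : HasDerivAt (fun s : ℝ => Real.sin (s / r')) (1 / r') 0 := by
          have h := (Real.hasDerivAt_sin ((0:ℝ) / r')).comp 0 h1
          simpa [Function.comp_def] using h
        have h3 : HasDerivAt (fun s : ℝ => r' * Real.sin (s / r')) 1 0 := by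
          have h := h2.const_mul r'
          have hre : r' * (1 / r') = 1 := by field_simp
          rw [hre] at h
          exact h
        have h4 : HasDerivAt (fun s : ℝ => z₂ + (r' * Real.sin (s / r')) • c) c 0 := by
          have h := (h3.smul_const c).const_add z₂
          simpa using h
        have h5 := ((hf.differentiable (by decide))
          (z₂ + (r' * Real.sin ((0:ℝ) / r')) • c)).hasFDerivAt.comp_hasDerivAt (0:ℝ) h4
        simpa [Function.comp_def] using h5
    have hz₂Z : z₂ ∈ Z := by
      have := hiso X hXS (f z₂) (hWX z₂ hz₂W) _ _ (htan ((1:ℝ),(0:ℝ))) (htan ((0:ℝ),(1:ℝ)))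
      simpa [hZdef] using this
    refine ⟨z₂, ?_, hz₂Z⟩
    exact Metric.ball_subset_ball (min_le_right _ _) hz₂B
  -- conclusion from closed + dense
  intro z
  have : Z = Set.univ := hZclosed.closure_eq ▸ hZdense.closure_eq
  have hz : z ∈ Z := this ▸ Set.mem_univ z
  simpa [hZdef] using hz

end Stratified


/-- Let `(V, ω)` be a symplectic manifold (modelled on `E`, here
`V` is the whole model) and `(A, S)` a Whitney (B) regular stratified subspace of
`V` all of whose strata are isotropic submanifolds: `A` is closed, is partitioned
into a locally finite family `S` of locally closed submanifolds (strata)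
satisfying the frontier condition, the filtration by dimension is closed
(a consequence of Whitney (B) regularity), and `ω` vanishes on the tangent
spaces of each stratum.  Let `R : [0,1] × V → V` be a smooth weak deformation
retraction of `V` to `A`.  Then `ω` is exact, with primitive
`(π_V)_* R^* ω = ∫₀¹ i_t^* ι_{∂/∂t} R^* ω dt`. -/
theorem exactness_for_isotropic_stratified_subspaces
    (ω : E → (Fin 2 → E) → ℝ) (hω : IsSymplecticForm ω)
    (S : Set (Set E)) (A : Set E)
    (hA : A = ⋃₀ S) (hAclosed : IsClosed A)
    (hdisj : ∀ X ∈ S, ∀ Y ∈ S, X ≠ Y → X ∩ Y = ∅)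
    (hlocclosed : ∀ X ∈ S, IsLocallyClosed X)
    (hlf : ∀ p : E, ∃ U ∈ nhds p, {X ∈ S | (X ∩ U).Nonempty}.Finite)
    (hfrontier : ∀ X ∈ S, ∀ Y ∈ S, (X ∩ closure Y).Nonempty → X ⊆ closure Y)
    (hfil : ∀ n : ℕ, IsClosed (⋃₀ {X | X ∈ S ∧ ∀ p ∈ X,
        Module.finrank ℝ (Submodule.span ℝ {v | TangentVecS X p v}) ≤ n}))
    (hiso : ∀ X ∈ S, ∀ p ∈ X, ∀ v w : E,
        TangentVecS X p v → TangentVecS X p w → ω p ![v, w] = 0)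
    (R : ℝ → E → E)
    (hRsm : ContDiff ℝ (⊤ : ℕ∞) (fun q : ℝ × E => R q.1 q.2))
    (hR1 : ∀ x : E, R 1 x = x)
    (hR0 : ∀ x : E, R 0 x ∈ A)
    (hRA : ∀ t ∈ Set.Icc (0 : ℝ) 1, ∀ a ∈ A, R t a ∈ A) :
    ∀ (x : E) (v : Fin 2 → E),
      extD 1 (fiberInt 1 (pullb 2 (fun q : ℝ × E => R q.1 q.2) ω)) x v = ω x v := by
  intro x v
  have halt : ∀ x, IsAltForm 2 (ω x) := hω.1
  have hsm : ContDiff ℝ ((⊤ : ℕ∞) : WithTop ℕ∞) (fun q : E × (Fin 2 → E) => ω q.1 q.2) :=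
    hω.2.1.of_le (by simp)
  have hcl : ∀ x, ∀ w : Fin 3 → E, extD 2 ω x w = 0 := hω.2.2.1
  set F : ℝ × E → E := fun q : ℝ × E => R q.1 q.2 with hFdef
  have hF : ContDiff ℝ ((⊤ : ℕ∞) : WithTop ℕ∞) F := hRsm.of_le (by simp)
  -- the three auxiliary functions (kept as explicit lambdas)
  have hG1s : ContDiff ℝ ((⊤ : ℕ∞) : WithTop ℕ∞) (fun q : ℝ × E =>
      ω (F q) ![fderiv ℝ F q ((1:ℝ), (0:E)), fderiv ℝ F q ((0:ℝ), v 1)]) :=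
    contDiff_form_comp ω hsm F hF _ _
  have hG0s : ContDiff ℝ ((⊤ : ℕ∞) : WithTop ℕ∞) (fun q : ℝ × E =>
      ω (F q) ![fderiv ℝ F q ((1:ℝ), (0:E)), fderiv ℝ F q ((0:ℝ), v 0)]) :=
    contDiff_form_comp ω hsm F hF _ _
  have hHs : ContDiff ℝ ((⊤ : ℕ∞) : WithTop ℕ∞) (fun q : ℝ × E =>
      ω (F q) ![fderiv ℝ F q ((0:ℝ), v 0), fderiv ℝ F q ((0:ℝ), v 1)]) :=
    contDiff_form_comp ω hsm F hF _ _
  -- Step 1: identify the integrands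
  have key0 : (fun y => fiberInt 1 (pullb 2 F ω) y (Fin.removeNth (0 : Fin 2) v))
      = (fun y => ∫ t in (0:ℝ)..1, (fun q : ℝ × E =>
          ω (F q) ![fderiv ℝ F q ((1:ℝ), (0:E)), fderiv ℝ F q ((0:ℝ), v 1)]) (t, y)) := by
    funext y
    simp only [fiberInt, pullb]
    refine intervalIntegral.integral_congr fun t _ => ?_
    have hv : (fun i => fderiv ℝ F (t, y)
        ((Fin.cons ((1:ℝ), (0:E)) (fun j => ((0:ℝ), Fin.removeNth (0 : Fin 2) v j))
          : Fin 2 → ℝ × E) i))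
        = ![fderiv ℝ F (t, y) ((1:ℝ), (0:E)), fderiv ℝ F (t, y) ((0:ℝ), v 1)] := by
      funext i; fin_cases i <;> rfl
    rw [hv]
  have key1 : (fun y => fiberInt 1 (pullb 2 F ω) y (Fin.removeNth (1 : Fin 2) v))
      = (fun y => ∫ t in (0:ℝ)..1, (fun q : ℝ × E =>
          ω (F q) ![fderiv ℝ F q ((1:ℝ), (0:E)), fderiv ℝ F q ((0:ℝ), v 0)]) (t, y)) := by
    funext y
    simp only [fiberInt, pullb]
    refine intervalIntegral.integral_congr fun t _ => ?_
    have hv : (fun i => fderiv ℝ F (t, y)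
        ((Fin.cons ((1:ℝ), (0:E)) (fun j => ((0:ℝ), Fin.removeNth (1 : Fin 2) v j))
          : Fin 2 → ℝ × E) i))
        = ![fderiv ℝ F (t, y) ((1:ℝ), (0:E)), fderiv ℝ F (t, y) ((0:ℝ), v 0)] := by
      funext i; fin_cases i <;> rfl
    rw [hv]
  -- Step 2: differentiate under the integral sign
  have d1 : fderiv ℝ (fun y => fiberInt 1 (pullb 2 F ω) y (Fin.removeNth (0 : Fin 2) v)) x (v 0)
      = ∫ t in (0:ℝ)..1, fderiv ℝ (fun q : ℝ × E =>
          ω (F q) ![fderiv ℝ F q ((1:ℝ), (0:E)), fderiv ℝ F q ((0:ℝ), v 1)]) (t, x) ((0:ℝ), v 0) := by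
    rw [key0]
    exact param_fderiv_apply _ hG1s x (v 0)
  have d0 : fderiv ℝ (fun y => fiberInt 1 (pullb 2 F ω) y (Fin.removeNth (1 : Fin 2) v)) x (v 1)
      = ∫ t in (0:ℝ)..1, fderiv ℝ (fun q : ℝ × E =>
          ω (F q) ![fderiv ℝ F q ((1:ℝ), (0:E)), fderiv ℝ F q ((0:ℝ), v 0)]) (t, x) ((0:ℝ), v 1) := by
    rw [key1]
    exact param_fderiv_apply _ hG0s x (v 1)
  -- Step 3: integrability of the two integrands
  have hint1 : IntervalIntegrable (fun t : ℝ => fderiv ℝ (fun q : ℝ × E =>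
      ω (F q) ![fderiv ℝ F q ((1:ℝ), (0:E)), fderiv ℝ F q ((0:ℝ), v 1)]) (t, x) ((0:ℝ), v 0))
      MeasureTheory.volume 0 1 := by
    apply Continuous.intervalIntegrable
    exact (((hG1s.fderiv_right (m := ((⊤ : ℕ∞) : WithTop ℕ∞)) (by simp)).continuous.comp
      (continuous_id.prodMk continuous_const)).clm_apply continuous_const)
  have hint0 : IntervalIntegrable (fun t : ℝ => fderiv ℝ (fun q : ℝ × E =>
      ω (F q) ![fderiv ℝ F q ((1:ℝ), (0:E)), fderiv ℝ F q ((0:ℝ), v 0)]) (t, x) ((0:ℝ), v 1))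
      MeasureTheory.volume 0 1 := by
    apply Continuous.intervalIntegrable
    exact (((hG0s.fderiv_right (m := ((⊤ : ℕ∞) : WithTop ℕ∞)) (by simp)).continuous.comp
      (continuous_id.prodMk continuous_const)).clm_apply continuous_const)
  -- Step 4: the pointwise Cartan identity
  have step3 : (∫ t in (0:ℝ)..1, fderiv ℝ (fun q : ℝ × E =>
        ω (F q) ![fderiv ℝ F q ((1:ℝ), (0:E)), fderiv ℝ F q ((0:ℝ), v 1)]) (t, x) ((0:ℝ), v 0))
      - (∫ t in (0:ℝ)..1, fderiv ℝ (fun q : ℝ × E =>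
        ω (F q) ![fderiv ℝ F q ((1:ℝ), (0:E)), fderiv ℝ F q ((0:ℝ), v 0)]) (t, x) ((0:ℝ), v 1))
      = ∫ t in (0:ℝ)..1, fderiv ℝ (fun q : ℝ × E =>
        ω (F q) ![fderiv ℝ F q ((0:ℝ), v 0), fderiv ℝ F q ((0:ℝ), v 1)]) (t, x) ((1:ℝ), (0:E)) := by
    rw [← intervalIntegral.integral_sub hint1 hint0]
    refine intervalIntegral.integral_congr fun t _ => ?_
    exact (star_identity ω halt hsm hcl F hF (t, x)
      ((1:ℝ), (0:E)) ((0:ℝ), v 0) ((0:ℝ), v 1)).symm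
  -- Step 5: fundamental theorem of calculus
  have step4 : (∫ t in (0:ℝ)..1, fderiv ℝ (fun q : ℝ × E =>
        ω (F q) ![fderiv ℝ F q ((0:ℝ), v 0), fderiv ℝ F q ((0:ℝ), v 1)]) (t, x) ((1:ℝ), (0:E)))
      = ω (F (1, x)) ![fderiv ℝ F (1, x) ((0:ℝ), v 0), fderiv ℝ F (1, x) ((0:ℝ), v 1)]
        - ω (F (0, x)) ![fderiv ℝ F (0, x) ((0:ℝ), v 0), fderiv ℝ F (0, x) ((0:ℝ), v 1)] :=
    param_ftc _ hHs x
  -- Step 6: value at time 1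
  have hid : ∀ w : E, fderiv ℝ F ((1:ℝ), x) ((0:ℝ), w) = w := by
    intro w
    have hcomp := (((hF.differentiable (by decide)) ((1:ℝ), x)).hasFDerivAt).comp x
      (hasFDerivAt_prodMk_right (1:ℝ) x)
    have hfun : (fun y : E => F (1, y)) = fun y : E => y := by
      funext y; exact hR1 y
    have hid' : HasFDerivAt (fun y : E => F (1, y)) (ContinuousLinearMap.id ℝ E) x := by
      rw [hfun]; exact hasFDerivAt_id x
    have huniq := hcomp.unique hid'
    calc fderiv ℝ F ((1:ℝ), x) ((0:ℝ), w)
        = ((fderiv ℝ F ((1:ℝ), x)).comp (ContinuousLinearMap.inr ℝ ℝ E)) w := rfl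
      _ = (ContinuousLinearMap.id ℝ E) w := by rw [huniq]
      _ = w := rfl
  have step5 : ω (F (1, x)) ![fderiv ℝ F (1, x) ((0:ℝ), v 0), fderiv ℝ F (1, x) ((0:ℝ), v 1)]
      = ω x ![v 0, v 1] := by
    rw [hid (v 0), hid (v 1)]
    have hx1 : F (1, x) = x := hR1 x
    rw [hx1]
  -- Step 7: value at time 0 vanishes by the isotropic stratification
  have step6 : ω (F (0, x)) ![fderiv ℝ F (0, x) ((0:ℝ), v 0), fderiv ℝ F (0, x) ((0:ℝ), v 1)]
      = 0 := by
    set L : ℝ × ℝ →L[ℝ] ℝ × E := ContinuousLinearMap.prod 0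
      (((ContinuousLinearMap.fst ℝ ℝ ℝ).smulRight (v 0))
        + ((ContinuousLinearMap.snd ℝ ℝ ℝ).smulRight (v 1))) with hLdef
    set ℓ : ℝ × ℝ → ℝ × E := fun s => ((0:ℝ), x + s.1 • v 0 + s.2 • v 1) with hldef
    have hℓd : ∀ z : ℝ × ℝ, HasFDerivAt ℓ L z := by
      intro z
      refine HasFDerivAt.prodMk (hasFDerivAt_const 0 z) ?_
      exact ((hasFDerivAt_fst.smul_const (v 0)).const_add x).add
        (hasFDerivAt_snd.smul_const (v 1))
    have hℓs : ContDiff ℝ ((⊤ : ℕ∞) : WithTop ℕ∞) ℓ := by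
      refine contDiff_const.prodMk ?_
      exact (contDiff_const.add (contDiff_fst.smul contDiff_const)).add
        (contDiff_snd.smul contDiff_const)
    have hf2 : ContDiff ℝ ((⊤ : ℕ∞) : WithTop ℕ∞) (fun s : ℝ × ℝ => F (ℓ s)) :=
      hF.comp hℓs
    have hf2A : ∀ z : ℝ × ℝ, F (ℓ z) ∈ A := fun z => hR0 _
    have hvan := isotropic_vanishing ω hsm S A hA hlocclosed hlf hiso
      (fun s : ℝ × ℝ => F (ℓ s)) hf2 hf2A (0, 0)
    have hℓ0 : ℓ ((0:ℝ), (0:ℝ)) = ((0:ℝ), x) := by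
      simp [hldef]
    have hDf2 : fderiv ℝ (fun s : ℝ × ℝ => F (ℓ s)) ((0:ℝ), (0:ℝ))
        = (fderiv ℝ F ((0:ℝ), x)).comp L := by
      have hc := (((hF.differentiable (by decide)) (ℓ ((0:ℝ), (0:ℝ)))).hasFDerivAt).comp
        ((0:ℝ), (0:ℝ)) (hℓd ((0:ℝ), (0:ℝ)))
      rw [hℓ0] at hc
      exact hc.fderiv
    have hL10 : L ((1:ℝ), (0:ℝ)) = ((0:ℝ), v 0) := by
      simp [hLdef]
    have hL01 : L ((0:ℝ), (1:ℝ)) = ((0:ℝ), v 1) := by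
      simp [hLdef]
    have h1 : fderiv ℝ (fun s : ℝ × ℝ => F (ℓ s)) ((0:ℝ), (0:ℝ)) ((1:ℝ), (0:ℝ))
        = fderiv ℝ F ((0:ℝ), x) ((0:ℝ), v 0) := by
      rw [hDf2, ContinuousLinearMap.comp_apply, hL10]
    have h2 : fderiv ℝ (fun s : ℝ × ℝ => F (ℓ s)) ((0:ℝ), (0:ℝ)) ((0:ℝ), (1:ℝ))
        = fderiv ℝ F ((0:ℝ), x) ((0:ℝ), v 1) := by
      rw [hDf2, ContinuousLinearMap.comp_apply, hL01]
    rw [h1, h2, hℓ0] at hvan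
    exact hvan
  -- Put everything together
  have step0 : extD 1 (fiberInt 1 (pullb 2 F ω)) x v
      = fderiv ℝ (fun y => fiberInt 1 (pullb 2 F ω) y (Fin.removeNth (0 : Fin 2) v)) x (v 0)
        - fderiv ℝ (fun y => fiberInt 1 (pullb 2 F ω) y (Fin.removeNth (1 : Fin 2) v)) x (v 1) := by
    simp only [extD, Nat.reduceAdd, Fin.sum_univ_two, Fin.val_zero, Fin.val_one, pow_zero,
      pow_one, one_mul, neg_one_mul]
    ring
  calc extD 1 (fiberInt 1 (pullb 2 F ω)) x v
      = _ - _ := step0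
    _ = _ := by rw [d1, d0, step3, step4, step5, step6]
    _ = ω x v := by rw [sub_zero]; exact (congrArg (ω x) (fin2_eta v)).symm

end
end

section
/- Convexity of Euler-like vector fields: Let N ⊆ M be a submanifold and let E₁,…,E_k be vector fields defined on a neighbourhood of N, each Euler-like along N. Let φ₁,…,φ_k be a smooth partition of unity. Then Σᵢ φᵢ Eᵢ is also Euler-like along N. -/
open scoped BigOperators

/-- In the local model of a submanifold `N = E₁ × {0}` of `M = E₁ × E₂`, a vector
field `X` (defined near `N`) is Euler-like along `N` iff it vanishes on `N` and
its linear approximation on the normal bundle (whose fibers are modelled by `E₂`)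
is the Euler vector field, i.e. the normal component of its linearization in the
normal directions is the identity. -/
def IsEulerLike {E₁ E₂ : Type*} [NormedAddCommGroup E₁] [NormedSpace ℝ E₁]
    [NormedAddCommGroup E₂] [NormedSpace ℝ E₂]
    (X : E₁ × E₂ → E₁ × E₂) : Prop :=
  (∀ x : E₁, X (x, 0) = 0) ∧
  (∀ (x : E₁) (w : E₂), (fderiv ℝ X (x, (0 : E₂)) ((0 : E₁), w)).2 = w)

/-- (Convexity of Euler-like vector fields.)  Let `N ⊆ M` be a
submanifold (local model `N = E₁ × {0} ⊆ E₁ × E₂ = M`) and `E₁,…,E_k` vector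
fields, each Euler-like along `N`.  Let `φ₁,…,φ_k` be a smooth partition of
unity.  Then `Σᵢ φᵢ Eᵢ` is also Euler-like along `N`. -/
theorem convexity_of_euler_like
    {E₁ E₂ : Type*} [NormedAddCommGroup E₁] [NormedSpace ℝ E₁]
    [NormedAddCommGroup E₂] [NormedSpace ℝ E₂]
    (k : ℕ) (X : Fin k → E₁ × E₂ → E₁ × E₂)
    (hXsm : ∀ i, ContDiff ℝ (⊤ : ℕ∞) (X i))
    (hX : ∀ i, IsEulerLike (X i))
    (φ : Fin k → E₁ × E₂ → ℝ)
    (hφsm : ∀ i, ContDiff ℝ (⊤ : ℕ∞) (φ i))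
    (hφ0 : ∀ i p, 0 ≤ φ i p)
    (hφsum : ∀ p, ∑ i, φ i p = 1) :
    IsEulerLike (fun p => ∑ i, φ i p • X i p) := by
  constructor
  · intro x
    simp [(hX _).1 x]
  · intro x w
    have hdX : ∀ i, DifferentiableAt ℝ (X i) (x, (0 : E₂)) :=
      fun i => ((hXsm i).differentiable (by simp)).differentiableAt
    have hdφ : ∀ i, DifferentiableAt ℝ (φ i) (x, (0 : E₂)) :=
      fun i => ((hφsm i).differentiable (by simp)).differentiableAt
    have hterm : ∀ i, DifferentiableAt ℝ (fun p => φ i p • X i p) (x, (0 : E₂)) :=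
      fun i => (hdφ i).smul (hdX i)
    rw [fderiv_fun_sum (fun i _ => hterm i)]
    have key : ∀ i, fderiv ℝ (fun p => φ i p • X i p) (x, (0 : E₂)) ((0 : E₁), w)
        = φ i (x, 0) • fderiv ℝ (X i) (x, (0 : E₂)) ((0 : E₁), w) := by
      intro i
      rw [fderiv_fun_smul (hdφ i) (hdX i)]
      simp [(hX i).1 x]
    simp only [ContinuousLinearMap.sum_apply, key]
    have : (∑ i, φ i (x, 0) • fderiv ℝ (X i) (x, (0 : E₂)) ((0 : E₁), w)).2
        = ∑ i, φ i (x, 0) • (fderiv ℝ (X i) (x, (0 : E₂)) ((0 : E₁), w)).2 :=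
      Prod.snd_sum
    rw [this]
    simp only [(hX _).2 x w, ← Finset.sum_smul, hφsum, one_smul]
end

section
/- Symmetry of second derivatives via the canonical flip: for every smooth map c : ℝ² → M, one has ∂/∂t ∂/∂s c(t,s) = κ_M(∂/∂s ∂/∂t c(t,s)) as elements of TTM, where κ_M is the canonical flip of the double tangent bundle. -/
noncomputable section

/-- The canonical flip of the double tangent bundle `TTM` for a manifold modelled
on `E` (`TTM = (E × E) × (E × E)`): `(x, v; u, w) ↦ (x, u; v, w)`. -/
def canonicalFlip {G : Type*} : (G × G) × (G × G) → (G × G) × (G × G) :=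
  fun q => ((q.1.1, q.2.1), (q.1.2, q.2.2))

/-- (Symmetry of second derivatives via the canonical flip.)
For every smooth map `c : ℝ² → M` (model `E`), one has
`∂/∂t ∂/∂s c(t,s) = κ_M(∂/∂s ∂/∂t c(t,s))` as elements of `TTM`.  Here
`∂/∂s c ∈ TM` is the curve `s ↦ (c(t,s), ∂_s c(t,s))` and `∂/∂t` of a
`TM`-valued curve records the base point and the velocity. -/
theorem second_derivative_symmetry_canonical_flip
    {E : Type*} [NormedAddCommGroup E] [NormedSpace ℝ E]
    (c : ℝ → ℝ → E)
    (hc : ContDiff ℝ (⊤ : ℕ∞) (fun p : ℝ × ℝ => c p.1 p.2)) (t s : ℝ) :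
    ((c t s, deriv (fun σ => c t σ) s),
        (deriv (fun τ => c τ s) t, deriv (fun τ => deriv (fun σ => c τ σ) s) t))
      = canonicalFlip
        ((c t s, deriv (fun τ => c τ s) t),
          (deriv (fun σ => c t σ) s,
            deriv (fun σ => deriv (fun τ => c τ σ) t) s)) := by
  set f : ℝ × ℝ → E := fun p => c p.1 p.2 with hf
  have hdiff : Differentiable ℝ f := hc.differentiable (by simp)
  have hd1 : Differentiable ℝ (fderiv ℝ f) :=
    (hc.fderiv_right (m := (⊤ : ℕ∞)) le_rfl).differentiable (by simp)
  have hA : ∀ τ σ : ℝ,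
      HasDerivAt (fun σ => c τ σ) (fderiv ℝ f (τ, σ) (0, 1)) σ := by
    intro τ σ
    have h1 : HasDerivAt (fun σ : ℝ => (τ, σ)) ((0 : ℝ), (1 : ℝ)) σ :=
      HasDerivAt.prodMk (hasDerivAt_const _ _) (hasDerivAt_id _)
    exact (hdiff (τ, σ)).hasFDerivAt.comp_hasDerivAt σ h1
  have hB : ∀ τ σ : ℝ,
      HasDerivAt (fun τ => c τ σ) (fderiv ℝ f (τ, σ) (1, 0)) τ := by
    intro τ σ
    have h1 : HasDerivAt (fun τ : ℝ => (τ, σ)) ((1 : ℝ), (0 : ℝ)) τ :=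
      HasDerivAt.prodMk (hasDerivAt_id _) (hasDerivAt_const _ _)
    exact (hdiff (τ, σ)).hasFDerivAt.comp_hasDerivAt τ h1
  -- second derivatives
  have hC : ∀ (v w : ℝ × ℝ) (x : ℝ × ℝ) (g : ℝ → ℝ × ℝ) (x₀ : ℝ),
      HasDerivAt g v x₀ → g x₀ = x →
      HasDerivAt (fun r => fderiv ℝ f (g r) w)
        (fderiv ℝ (fderiv ℝ f) x v w) x₀ := by
    intro v w x g x₀ hg hgx
    subst hgx
    have h2 : HasDerivAt (fun r => fderiv ℝ f (g r))
        (fderiv ℝ (fderiv ℝ f) (g x₀) v) x₀ :=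
      (hd1 (g x₀)).hasFDerivAt.comp_hasDerivAt x₀ hg
    have := h2.clm_apply (hasDerivAt_const x₀ w)
    simpa using this
  have e1 : deriv (fun τ => deriv (fun σ => c τ σ) s) t
      = fderiv ℝ (fderiv ℝ f) (t, s) (1, 0) (0, 1) := by
    have : (fun τ => deriv (fun σ => c τ σ) s)
        = fun τ => fderiv ℝ f (τ, s) (0, 1) := by
      funext τ; exact (hA τ s).deriv
    rw [this]
    exact (hC (1, 0) (0, 1) (t, s) (fun τ => (τ, s)) t
      (HasDerivAt.prodMk (hasDerivAt_id _) (hasDerivAt_const _ _)) rfl).deriv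
  have e2 : deriv (fun σ => deriv (fun τ => c τ σ) t) s
      = fderiv ℝ (fderiv ℝ f) (t, s) (0, 1) (1, 0) := by
    have : (fun σ => deriv (fun τ => c τ σ) t)
        = fun σ => fderiv ℝ f (t, σ) (1, 0) := by
      funext σ; exact (hB t σ).deriv
    rw [this]
    exact (hC (0, 1) (1, 0) (t, s) (fun σ => (t, σ)) s
      (HasDerivAt.prodMk (hasDerivAt_const _ _) (hasDerivAt_id _)) rfl).deriv
  have hsym : fderiv ℝ (fderiv ℝ f) (t, s) (1, 0) (0, 1)
      = fderiv ℝ (fderiv ℝ f) (t, s) (0, 1) (1, 0) :=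
    (hc.contDiffAt.isSymmSndFDerivAt (by rw [minSmoothness_of_isRCLikeNormedField]; exact WithTop.coe_le_coe.mpr le_top)) _ _
  simp only [canonicalFlip, e1, e2, hsym]

end
end

section
/- Let N₀ ⊆ M₀ and N₁ ⊆ M₁ be submanifolds, G : TM₀|_{N₀} → TM₁|_{N₁} a vector bundle isomorphism over a diffeomorphism g : N₀ → N₁, and 𝒢 : U₀ → U₁ a diffeomorphism of neighbourhoods of N₀, N₁ that agrees with g on N₀ and whose differential agrees with G along N₀. Let E₀ be a vector field on U₀ tangent to N₀ and E₁ = 𝒢_* E₀ its pushforward. Then DE₁ restricted to N₁ equals κ_{M₁} ∘ DG ∘ κ_{M₀} ∘ DE₀ ∘ G^{−1}; in particular DE₁|_{N₁} is independent of the choice of extension 𝒢. -/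
noncomputable section

variable {E E' F F' : Type*}
  [NormedAddCommGroup E] [NormedSpace ℝ E] [NormedAddCommGroup E'] [NormedSpace ℝ E']
  [NormedAddCommGroup F] [NormedSpace ℝ F] [NormedAddCommGroup F'] [NormedSpace ℝ F']

/-- The differential `DX : TM → TTM` of a vector field `X` on `M` viewed as a map
`M → TM`: `(p, v) ↦ ((p, X p), (v, D_p X v))`. -/
def Dvf {M : Type*} [NormedAddCommGroup M] [NormedSpace ℝ M]
    (X : M → M) : M × M → (M × M) × (M × M) :=
  fun q => ((q.1, X q.1), (q.2, fderiv ℝ X q.1 q.2))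

/-- The bundle map `G : TM₀|_{N₀} → TM₁|_{N₁}` over `g : N₀ → N₁` viewed as a map
of manifolds `TM₀|_{N₀} → TM₁|_{N₁}`, in the local model `N₀ = E × {0} ⊆ E × E'`,
`N₁ = F × {0} ⊆ F × F'` (extended constantly in the normal direction of the base). -/
def bundleMapHat (g : E → F) (G : E → ((E × E') →L[ℝ] (F × F'))) :
    (E × E') × (E × E') → (F × F') × (F × F') :=
  fun q => ((g q.1.1, (0 : F')), G q.1.1 q.2)

/-- Let `N₀ ⊆ M₀` and `N₁ ⊆ M₁` be submanifolds (local models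
`Nᵢ = base × {0}`), `G` a vector bundle isomorphism `TM₀|_{N₀} → TM₁|_{N₁}` over a
diffeomorphism `g : N₀ → N₁`, and `𝒢 : U₀ → U₁` a diffeomorphism agreeing with `g`
on `N₀` and whose differential agrees with `G` along `N₀`.  Let `X₀` be a vector
field on `U₀` tangent to `N₀` and `X₁ = 𝒢_* X₀` its pushforward.  Then `DX₁`
restricted to `N₁` equals `κ_{M₁} ∘ DG ∘ κ_{M₀} ∘ DX₀ ∘ G⁻¹`; in particular
`DX₁|_{N₁}` is independent of the choice of extension `𝒢`. -/
theorem differential_of_pushforward_vector_field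
    (g : E → F) (g' : F → E)
    (hg : ContDiff ℝ (⊤ : ℕ∞) g) (hg' : ContDiff ℝ (⊤ : ℕ∞) g')
    (hgg' : ∀ z : F, g (g' z) = z) (hg'g : ∀ x : E, g' (g x) = x)
    (G : E → ((E × E') →L[ℝ] (F × F')))
    (Ginv : F → ((F × F') →L[ℝ] (E × E')))
    (hG : ContDiff ℝ (⊤ : ℕ∞) G) (hGinv : ContDiff ℝ (⊤ : ℕ∞) Ginv)
    (hGG : ∀ x : E, ∀ u : E × E', Ginv (g x) (G x u) = u)
    (hGG' : ∀ z : F, ∀ u : F × F', G (g' z) (Ginv z u) = u)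
    (𝒢 : E × E' → F × F') (𝒢inv : F × F' → E × E')
    (h𝒢 : ContDiff ℝ (⊤ : ℕ∞) 𝒢) (h𝒢inv : ContDiff ℝ (⊤ : ℕ∞) 𝒢inv)
    (h𝒢𝒢 : ∀ p, 𝒢inv (𝒢 p) = p) (h𝒢𝒢' : ∀ q, 𝒢 (𝒢inv q) = q)
    (h𝒢g : ∀ x : E, 𝒢 (x, 0) = (g x, 0))
    (h𝒢G : ∀ x : E, fderiv ℝ 𝒢 (x, (0 : E')) = G x)
    (X₀ : E × E' → E × E') (hX₀ : ContDiff ℝ (⊤ : ℕ∞) X₀)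
    (htan : ∀ x : E, (X₀ (x, (0 : E'))).2 = 0)
    (X₁ : F × F' → F × F')
    (hX₁ : ∀ q, X₁ q = fderiv ℝ 𝒢 (𝒢inv q) (X₀ (𝒢inv q))) :
    ∀ (z : F) (v : F × F'),
      Dvf X₁ (((z, (0 : F')), v))
        = canonicalFlip
            ((fun r : ((E × E') × (E × E')) × ((E × E') × (E × E')) =>
                (bundleMapHat g G r.1, fderiv ℝ (bundleMapHat g G) r.1 r.2))
              (canonicalFlip (Dvf X₀ (((g' z, (0 : E')), Ginv z v))))) := by
  intro z v
  set x := g' z with hxdef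
  set u := Ginv z v with hudef
  have hgx : g x = z := hgg' z
  have hGxu : G x u = v := hGG' z v
  have hD𝒢 : Differentiable ℝ 𝒢 := h𝒢.differentiable (by simp)
  have hD𝒢inv : Differentiable ℝ 𝒢inv := h𝒢inv.differentiable (by simp)
  have hDX₀ : Differentiable ℝ X₀ := hX₀.differentiable (by simp)
  have hDg : Differentiable ℝ g := hg.differentiable (by simp)
  have hDG : Differentiable ℝ G := hG.differentiable (by simp)
  have hDF𝒢 : Differentiable ℝ (fderiv ℝ 𝒢) :=
    (h𝒢.fderiv_right (m := 1) (WithTop.coe_le_coe.mpr le_top)).differentiable one_ne_zero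
  have hX0 : X₀ (x, (0 : E')) = ((X₀ (x, (0 : E'))).1, (0 : E')) :=
    Prod.ext rfl (htan x)
  set a := (X₀ (x, (0 : E'))).1 with hadef
  -- Lemma A : base derivative of 𝒢
  have hbase : ∀ b : E, fderiv ℝ 𝒢 (x, (0 : E')) (b, 0) = (fderiv ℝ g x b, 0) := by
    intro b
    have h1 : HasFDerivAt (fun t : E => 𝒢 (t, 0))
        ((fderiv ℝ 𝒢 (x, (0 : E'))).comp (ContinuousLinearMap.inl ℝ E E')) x :=
      (hD𝒢 (x, (0 : E'))).hasFDerivAt.comp x (ContinuousLinearMap.inl ℝ E E').hasFDerivAt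
    have h2 : HasFDerivAt (fun t : E => 𝒢 (t, 0))
        ((ContinuousLinearMap.inl ℝ F F').comp (fderiv ℝ g x)) x := by
      have heq : (fun t : E => 𝒢 (t, (0 : E'))) = fun t : E => ((g t, (0 : F')) : F × F') :=
        funext h𝒢g
      rw [heq]
      exact (ContinuousLinearMap.inl ℝ F F').hasFDerivAt.comp x (hDg x).hasFDerivAt
    have := congrFun (congrArg (DFunLike.coe) (h1.unique h2)) b
    simpa using this
  -- Lemma B : base derivative of fderiv 𝒢 is fderiv G
  have hbase2 : ∀ b : E,
      fderiv ℝ (fderiv ℝ 𝒢) (x, (0 : E')) (b, 0) = fderiv ℝ G x b := by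
    intro b
    have h1 : HasFDerivAt (fun t : E => fderiv ℝ 𝒢 (t, 0))
        ((fderiv ℝ (fderiv ℝ 𝒢) (x, (0 : E'))).comp (ContinuousLinearMap.inl ℝ E E')) x :=
      (hDF𝒢 (x, (0 : E'))).hasFDerivAt.comp x (ContinuousLinearMap.inl ℝ E E').hasFDerivAt
    have h2 : HasFDerivAt (fun t : E => fderiv ℝ 𝒢 (t, 0)) (fderiv ℝ G x) x := by
      have heq : (fun t : E => fderiv ℝ 𝒢 (t, (0 : E'))) = G := funext h𝒢G
      rw [heq]
      exact (hDG x).hasFDerivAt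
    have := congrFun (congrArg (DFunLike.coe) (h1.unique h2)) b
    simpa using this
  -- symmetry of the second derivative of 𝒢
  have hsymm : ∀ w₁ w₂ : E × E',
      fderiv ℝ (fderiv ℝ 𝒢) (x, (0 : E')) w₁ w₂
        = fderiv ℝ (fderiv ℝ 𝒢) (x, (0 : E')) w₂ w₁ :=
    second_derivative_symmetric (fun y => (hD𝒢 y).hasFDerivAt)
      (hDF𝒢 (x, (0 : E'))).hasFDerivAt
  -- 𝒢 and 𝒢inv on the base point
  have h𝒢x : 𝒢 (x, (0 : E')) = (z, (0 : F')) := by rw [h𝒢g x, hgx]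
  have h𝒢inv0 : 𝒢inv (z, (0 : F')) = (x, (0 : E')) := by rw [← h𝒢x, h𝒢𝒢]
  -- derivative of 𝒢inv at (z,0)
  have hDinv : ∀ w : E × E',
      fderiv ℝ 𝒢inv (z, (0 : F')) (fderiv ℝ 𝒢 (x, (0 : E')) w) = w := by
    intro w
    have h1 : HasFDerivAt (fun p => 𝒢inv (𝒢 p))
        ((fderiv ℝ 𝒢inv (z, (0 : F'))).comp (fderiv ℝ 𝒢 (x, (0 : E')))) (x, (0 : E')) := by
      refine HasFDerivAt.comp _ ?_ (hD𝒢 _).hasFDerivAt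
      rw [h𝒢x]
      exact (hD𝒢inv _).hasFDerivAt
    have h2 : HasFDerivAt (fun p => 𝒢inv (𝒢 p))
        (ContinuousLinearMap.id ℝ (E × E')) (x, (0 : E')) := by
      have heq : (fun p => 𝒢inv (𝒢 p)) = id := funext h𝒢𝒢
      rw [heq]
      exact hasFDerivAt_id _
    have := congrFun (congrArg (DFunLike.coe) (h1.unique h2)) w
    simpa using this
  have hDinv_v : fderiv ℝ 𝒢inv (z, (0 : F')) v = u := by
    have := hDinv u
    rwa [h𝒢G x, hGxu] at this
  -- value of X₁ on the base
  have hX₁0 : X₁ (z, (0 : F')) = (fderiv ℝ g x a, 0) := by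
    rw [hX₁, h𝒢inv0, h𝒢G x]
    rw [← h𝒢G x]
    rw [hX0]
    exact hbase a
  -- derivative of X₁ at (z,0) applied to v
  set Dinv := fderiv ℝ 𝒢inv (z, (0 : F')) with hDinvdef
  set D2 := fderiv ℝ (fderiv ℝ 𝒢) (x, (0 : E')) with hD2def
  have hinner : HasFDerivAt 𝒢inv Dinv (z, (0 : F')) := (hD𝒢inv _).hasFDerivAt
  have hc : HasFDerivAt (fun q => fderiv ℝ 𝒢 (𝒢inv q)) (D2.comp Dinv) (z, (0 : F')) := by
    refine HasFDerivAt.comp _ ?_ hinner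
    rw [h𝒢inv0]
    exact (hDF𝒢 _).hasFDerivAt
  have hu' : HasFDerivAt (fun q => X₀ (𝒢inv q))
      ((fderiv ℝ X₀ (x, (0 : E'))).comp Dinv) (z, (0 : F')) := by
    refine HasFDerivAt.comp _ ?_ hinner
    rw [h𝒢inv0]
    exact (hDX₀ _).hasFDerivAt
  have happ := hc.clm_apply hu'
  have hX₁fun : X₁ = fun q => fderiv ℝ 𝒢 (𝒢inv q) (X₀ (𝒢inv q)) := funext hX₁
  rw [← hX₁fun] at happ
  have hfd : fderiv ℝ X₁ (z, (0 : F')) v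
      = G x (fderiv ℝ X₀ (x, (0 : E')) u) + fderiv ℝ G x a u := by
    rw [happ.fderiv]
    simp only [ContinuousLinearMap.add_apply, ContinuousLinearMap.comp_apply,
      ContinuousLinearMap.flip_apply, h𝒢inv0, ← hDinvdef, hDinv_v, h𝒢G x]
    congr 1
    rw [hsymm u (X₀ (x, (0 : E'))), hX0, hbase2 a]
  -- derivative of bundleMapHat at ((x,0),u)
  set p₀ : (E × E') × (E × E') := ((x, (0 : E')), u) with hp₀
  have hfst1 : HasFDerivAt (fun q : (E × E') × (E × E') => q.1.1)
      ((ContinuousLinearMap.fst ℝ E E').comp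
        (ContinuousLinearMap.fst ℝ (E × E') (E × E'))) p₀ :=
    (hasFDerivAt_fst).comp p₀ hasFDerivAt_fst
  have hB1 : HasFDerivAt (fun q : (E × E') × (E × E') => ((g q.1.1, (0 : F')) : F × F'))
      (((fderiv ℝ g x).comp ((ContinuousLinearMap.fst ℝ E E').comp
        (ContinuousLinearMap.fst ℝ (E × E') (E × E')))).prod 0) p₀ := by
    refine HasFDerivAt.prodMk ?_ (hasFDerivAt_const _ _)
    exact (hDg x).hasFDerivAt.comp p₀ hfst1
  have hB2c : HasFDerivAt (fun q : (E × E') × (E × E') => G q.1.1)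
      ((fderiv ℝ G x).comp ((ContinuousLinearMap.fst ℝ E E').comp
        (ContinuousLinearMap.fst ℝ (E × E') (E × E')))) p₀ :=
    (hDG x).hasFDerivAt.comp p₀ hfst1
  have hB2 := hB2c.clm_apply (hasFDerivAt_snd (p := p₀))
  have hB : HasFDerivAt (bundleMapHat g G)
      ((((fderiv ℝ g x).comp ((ContinuousLinearMap.fst ℝ E E').comp
          (ContinuousLinearMap.fst ℝ (E × E') (E × E')))).prod 0).prod
        ((G x).comp (ContinuousLinearMap.snd ℝ (E × E') (E × E')) +
          ((fderiv ℝ G x).comp ((ContinuousLinearMap.fst ℝ E E').comp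
            (ContinuousLinearMap.fst ℝ (E × E') (E × E')))).flip u)) p₀ :=
    hB1.prodMk hB2
  have hBfd := hB.fderiv
  -- put everything together
  show Dvf X₁ ((z, (0 : F')), v) = _
  simp only [Dvf, canonicalFlip, bundleMapHat]
  rw [hBfd]
  simp only [ContinuousLinearMap.prod_apply, ContinuousLinearMap.add_apply,
    ContinuousLinearMap.comp_apply, ContinuousLinearMap.flip_apply,
    ContinuousLinearMap.coe_fst', ContinuousLinearMap.coe_snd',
    ContinuousLinearMap.zero_apply]
  rw [hX₁0, hfd, hgx, hGxu, ← hadef]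
end
end

section
/- Let M be a manifold, A ⊆ M a submanifold with vanishing ideal I = I(M,A), and let (X_t) be a smooth time-dependent vector field on M lying in the second step I₂ of the induced I-adic filtration of time-dependent vector fields (i.e. vanishing to second order along A). Then wherever it is defined, the differential of the flow restricts to the identity along A: D(Φ^{t₀}_{(X_t)})|_{T_pM} = Id for every p ∈ A and every t₀. -/
open Set

section Aux

variable {E₁ E₂ : Type*} [NormedAddCommGroup E₁] [NormedSpace ℝ E₁]
    [NormedAddCommGroup E₂] [NormedSpace ℝ E₂]

/-- Points of `A` are fixed by the flow: local uniqueness + clopen argument. -/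
theorem flow_fixes_A
    (X : ℝ → E₁ × E₂ → E₁ × E₂)
    (hXsm : ContDiff ℝ (⊤ : ℕ∞) (fun q : ℝ × (E₁ × E₂) => X q.1 q.2))
    (hX0 : ∀ (t : ℝ) (x : E₁), X t (x, 0) = 0)
    (Φ : ℝ → E₁ × E₂ → E₁ × E₂)
    (hΦsm : ContDiff ℝ (⊤ : ℕ∞) (fun q : ℝ × (E₁ × E₂) => Φ q.1 q.2))
    (hΦ0 : ∀ p, Φ 0 p = p)
    (hflow : ∀ t p, HasDerivAt (fun τ => Φ τ p) (X t (Φ t p)) t) :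
    ∀ (t : ℝ) (x : E₁), Φ t (x, 0) = (x, 0) := by
  intro t x
  set p : E₁ × E₂ := (x, 0) with hp
  have hXp : ∀ s : ℝ, X s p = 0 := fun s => hX0 s x
  -- the set of times where the flow fixes p is clopen and nonempty
  set S : Set ℝ := {t : ℝ | Φ t p = p} with hS
  have hcont : Continuous (fun t : ℝ => Φ t p) := by
    have := hΦsm.continuous
    exact this.comp (continuous_id.prodMk continuous_const)
  have hclosed : IsClosed S := isClosed_eq hcont continuous_const
  have hopen : IsOpen S := by
    rw [isOpen_iff_mem_nhds]
    intro t₁ ht₁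
    -- local Lipschitz of X near (t₁, p)
    obtain ⟨K, u, hu, hlip⟩ :
        ∃ K, ∃ u ∈ nhds (t₁, p), LipschitzOnWith K (fun q : ℝ × (E₁ × E₂) => X q.1 q.2) u :=
      (hXsm.contDiffAt.of_le (by simp)).exists_lipschitzOnWith
    set s : ℝ → Set (E₁ × E₂) := fun τ => {y | (τ, y) ∈ u} with hsdef
    have hlip' : ∀ τ : ℝ, LipschitzOnWith K (X τ) (s τ) := by
      intro τ y hy z hz
      have := hlip (show ((τ, y) : ℝ × (E₁ × E₂)) ∈ u from hy)
        (show ((τ, z) : ℝ × (E₁ × E₂)) ∈ u from hz)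
      simpa [Prod.edist_eq] using this
    have heq : (fun τ => Φ τ p) =ᶠ[nhds t₁] (fun _ => p) := by
      apply ODE_solution_unique_of_eventually (Filter.Eventually.of_forall hlip')
      · -- the flow curve is a solution staying in the slices
        have h1 : ∀ᶠ τ in nhds t₁, (τ, Φ τ p) ∈ u := by
          have hc : Continuous (fun τ : ℝ => (τ, Φ τ p)) := continuous_id.prodMk hcont
          have : (t₁, Φ t₁ p) = (t₁, p) := by rw [ht₁]
          exact hc.continuousAt.preimage_mem_nhds (this ▸ hu)
        filter_upwards [h1] with τ hτ
        exact ⟨hflow τ p, hτ⟩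
      · -- the constant curve is a solution staying in the slices
        have h1 : ∀ᶠ τ in nhds t₁, (τ, p) ∈ u := by
          have hc : Continuous (fun τ : ℝ => ((τ, p) : ℝ × (E₁ × E₂))) :=
            continuous_id.prodMk continuous_const
          exact hc.continuousAt.preimage_mem_nhds hu
        filter_upwards [h1] with τ hτ
        refine ⟨?_, hτ⟩
        simpa [hXp τ] using (hasDerivAt_const τ p)
      · exact ht₁
    exact Filter.eventually_iff_exists_mem.mp heq |>.elim
      (fun v hv => mem_nhds_iff.mpr (by
        obtain ⟨hv, h⟩ := hv
        obtain ⟨w, hw1, hw2, hw3⟩ := mem_nhds_iff.mp hv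
        exact ⟨w, fun τ hτ => h τ (hw1 hτ), hw2, hw3⟩))
  have h0 : (0 : ℝ) ∈ S := hΦ0 p
  have huniv : S = univ := IsClopen.eq_univ ⟨hclosed, hopen⟩ ⟨0, h0⟩
  have ht : t ∈ S := by rw [huniv]; exact mem_univ t
  exact ht

end Aux

theorem flow_differential_identity_of_second_order_vanishing
    {E₁ E₂ : Type*} [NormedAddCommGroup E₁] [NormedSpace ℝ E₁]
    [NormedAddCommGroup E₂] [NormedSpace ℝ E₂]
    (X : ℝ → E₁ × E₂ → E₁ × E₂)
    (hXsm : ContDiff ℝ (⊤ : ℕ∞) (fun q : ℝ × (E₁ × E₂) => X q.1 q.2))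
    (hX0 : ∀ (t : ℝ) (x : E₁), X t (x, 0) = 0)
    (hX1 : ∀ (t : ℝ) (x : E₁), fderiv ℝ (X t) (x, (0 : E₂)) = 0)
    (Φ : ℝ → E₁ × E₂ → E₁ × E₂)
    (hΦsm : ContDiff ℝ (⊤ : ℕ∞) (fun q : ℝ × (E₁ × E₂) => Φ q.1 q.2))
    (hΦ0 : ∀ p, Φ 0 p = p)
    (hflow : ∀ t p, HasDerivAt (fun τ => Φ τ p) (X t (Φ t p)) t) :
    ∀ (t₀ : ℝ) (x : E₁),
      fderiv ℝ (Φ t₀) (x, (0 : E₂)) = ContinuousLinearMap.id ℝ (E₁ × E₂) := by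
  classical
  intro t₀ x
  set p : E₁ × E₂ := (x, 0) with hp
  have hfix : ∀ t : ℝ, Φ t p = p := fun t => flow_fixes_A X hXsm hX0 Φ hΦsm hΦ0 hflow t x
  set F : ℝ × (E₁ × E₂) → E₁ × E₂ := fun q => Φ q.1 q.2 with hF
  set X' : ℝ × (E₁ × E₂) → E₁ × E₂ := fun q => X q.1 q.2 with hX'
  have hFdiff : Differentiable ℝ F := hΦsm.differentiable (by simp)
  have hX'diff : Differentiable ℝ X' := hXsm.differentiable (by simp)
  set G : ℝ × (E₁ × E₂) → (ℝ × (E₁ × E₂)) →L[ℝ] (E₁ × E₂) := fderiv ℝ F with hG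
  have hGF : ∀ q, HasFDerivAt F (G q) q := fun q => (hFdiff q).hasFDerivAt
  have hGsm : ContDiff ℝ (⊤ : ℕ∞) G := hΦsm.fderiv_right (by simp)
  have hGdiff : Differentiable ℝ G := hGsm.differentiable (by simp)
  -- the time derivative of F is picked up by G applied to (1,0)
  have htime : ∀ q : ℝ × (E₁ × E₂), G q (1, 0) = X' (q.1, F q) := by
    intro q
    have hcurve : HasDerivAt (fun τ : ℝ => ((τ, q.2) : ℝ × (E₁ × E₂))) (1, 0) q.1 :=
      HasDerivAt.prodMk (hasDerivAt_id q.1) (hasDerivAt_const q.1 q.2)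
    have h1 : HasDerivAt (fun τ => F (τ, q.2)) (G q (1, 0)) q.1 := by
      have := (hGF q).comp_hasDerivAt q.1 (by simpa using hcurve)
      exact this
    have h2 : HasDerivAt (fun τ => Φ τ q.2) (X q.1 (Φ q.1 q.2)) q.1 := hflow q.1 q.2
    exact h1.unique h2
  -- spatial derivative of X' at (t,p) in any direction (0,w) vanishes
  have hXspace : ∀ (t : ℝ) (w : E₁ × E₂), fderiv ℝ X' (t, p) (0, w) = 0 := by
    intro t w
    have hin : HasFDerivAt (fun y : E₁ × E₂ => ((t, y) : ℝ × (E₁ × E₂)))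
        (ContinuousLinearMap.inr ℝ ℝ (E₁ × E₂)) p :=
      HasFDerivAt.prodMk (hasFDerivAt_const t p) (hasFDerivAt_id p)
    have hXt : HasFDerivAt (X t)
        ((fderiv ℝ X' (t, p)).comp (ContinuousLinearMap.inr ℝ ℝ (E₁ × E₂))) p := by
      have := (hX'diff (t, p)).hasFDerivAt.comp p hin
      exact this
    have hXtf : fderiv ℝ (X t) p = 0 := hp ▸ hX1 t x
    have h0 : fderiv ℝ X' (t, p) (0, w) = fderiv ℝ (X t) p w := by
      rw [hXt.fderiv]; rfl
    rw [h0, hXtf]; rfl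
  -- the map h v : t ↦ G (t,p) (0,v) is constant
  have hkey : ∀ (v : E₁ × E₂) (t : ℝ), HasDerivAt (fun τ => G (τ, p) (0, v)) 0 t := by
    intro v t
    -- derivative of t ↦ G (t,p) is (fderiv G (t,p)) (1,0)
    have hcurve : HasDerivAt (fun τ : ℝ => ((τ, p) : ℝ × (E₁ × E₂))) (1, 0) t :=
      HasDerivAt.prodMk (hasDerivAt_id t) (hasDerivAt_const t p)
    have hGt : HasDerivAt (fun τ => G (τ, p)) (fderiv ℝ G (t, p) (1, 0)) t := by
      have := (hGdiff (t, p)).hasFDerivAt.comp_hasDerivAt t (by simpa using hcurve)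
      exact this
    have happ : HasDerivAt (fun τ => G (τ, p) (0, v)) ((fderiv ℝ G (t, p) (1, 0)) (0, v)) t := by
      have := hGt.clm_apply (hasDerivAt_const t ((0, v) : ℝ × (E₁ × E₂)))
      simpa using this
    -- now show the derivative is zero using symmetry of second derivative
    have hsymm : fderiv ℝ G (t, p) (1, 0) (0, v) = fderiv ℝ G (t, p) (0, v) (1, 0) :=
      second_derivative_symmetric hGF (hGdiff (t, p)).hasFDerivAt (1, 0) (0, v)
    -- compute fderiv G (t,p) (0,v) (1,0)
    have hev : fderiv ℝ G (t, p) (0, v) (1, 0) = 0 := by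
      set ev : ((ℝ × (E₁ × E₂)) →L[ℝ] (E₁ × E₂)) →L[ℝ] (E₁ × E₂) :=
        (ContinuousLinearMap.apply ℝ (E₁ × E₂)) ((1, 0) : ℝ × (E₁ × E₂)) with hev'
      -- two computations of the derivative of q ↦ G q (1,0)
      have h1 : HasFDerivAt (fun q : ℝ × (E₁ × E₂) => G q (1, 0))
          (ev.comp (fderiv ℝ G (t, p))) (t, p) :=
        ev.hasFDerivAt.comp (t, p) (hGdiff (t, p)).hasFDerivAt
      have hcomp : HasFDerivAt (fun q : ℝ × (E₁ × E₂) => X' (q.1, F q))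
          ((fderiv ℝ X' (t, p)).comp
            ((ContinuousLinearMap.fst ℝ ℝ (E₁ × E₂)).prod (G (t, p)))) (t, p) := by
        have hinner : HasFDerivAt (fun q : ℝ × (E₁ × E₂) => ((q.1, F q) : ℝ × (E₁ × E₂)))
            ((ContinuousLinearMap.fst ℝ ℝ (E₁ × E₂)).prod (G (t, p))) (t, p) :=
          HasFDerivAt.prodMk (hasFDerivAt_fst) (hGF (t, p))
        have hFtp : F (t, p) = p := hfix t
        have := (hX'diff ((t : ℝ), F (t, p))).hasFDerivAt.comp (t, p) hinner
        rw [hFtp] at this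
        exact this
      have heqfun : (fun q : ℝ × (E₁ × E₂) => G q (1, 0)) = (fun q : ℝ × (E₁ × E₂) => X' (q.1, F q)) := by
        funext q; exact htime q
      rw [heqfun] at h1
      have huniq := h1.unique hcomp
      have := congrArg (fun (L : (ℝ × (E₁ × E₂)) →L[ℝ] (E₁ × E₂)) => L ((0, v) : ℝ × (E₁ × E₂))) huniq
      simp only [ContinuousLinearMap.comp_apply, ContinuousLinearMap.prod_apply,
        ContinuousLinearMap.coe_fst', hev', ContinuousLinearMap.apply_apply] at this
      rw [this]
      simpa using hXspace t (G (t, p) (0, v))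
    rw [hsymm, hev] at happ
    exact happ
  -- hence G (t,p) (0,v) is constant in t
  have hconst : ∀ (v : E₁ × E₂) (t : ℝ), G (t, p) (0, v) = G (0, p) (0, v) := by
    intro v t
    have hd : Differentiable ℝ (fun τ => G (τ, p) (0, v)) := fun τ => (hkey v τ).differentiableAt
    have hz : ∀ τ, deriv (fun τ => G (τ, p) (0, v)) τ = 0 := fun τ => (hkey v τ).deriv
    exact is_const_of_deriv_eq_zero hd hz t 0
  -- fderiv (Φ t) p is G (t,p) restricted to the space directions
  have hrestrict : ∀ t : ℝ, HasFDerivAt (Φ t)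
      ((G (t, p)).comp (ContinuousLinearMap.inr ℝ ℝ (E₁ × E₂))) p := by
    intro t
    have hin : HasFDerivAt (fun y : E₁ × E₂ => ((t, y) : ℝ × (E₁ × E₂)))
        (ContinuousLinearMap.inr ℝ ℝ (E₁ × E₂)) p :=
      HasFDerivAt.prodMk (hasFDerivAt_const t p) (hasFDerivAt_id p)
    exact (hGF (t, p)).comp p hin
  -- at time 0, Φ 0 = id, so G (0,p) (0,v) = v
  have h0 : ∀ v : E₁ × E₂, G (0, p) (0, v) = v := by
    intro v
    have hid : HasFDerivAt (Φ 0) (ContinuousLinearMap.id ℝ (E₁ × E₂)) p := by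
      have : Φ 0 = id := funext hΦ0
      rw [this]; exact hasFDerivAt_id p
    have := (hrestrict 0).unique hid
    have := congrArg (fun (L : (E₁ × E₂) →L[ℝ] (E₁ × E₂)) => L v) this
    simpa using this
  -- conclude
  have hfinal := (hrestrict t₀).fderiv
  rw [hfinal]
  refine ContinuousLinearMap.ext fun v => ?_
  simpa using (hconst v t₀).trans (h0 v)
end
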